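/- arXiv:1305.2497 — 5 statements merged into one kernel-verified Lean document; each statement's English description precedes it below -/
import Mathlib

section
/- Let Φ : (0, ∞) → (0, ∞) be locally absolutely continuous and suppose its a.e. derivative satisfies tΦ'(t)/Φ(t) → 0 as t → 0⁺ (i.e., for every η > 0 there is t₀ > 0 with |tΦ'(t)| ≤ ηΦ(t) for a.e. t ∈ (0, t₀)). Then for every ε > 0 there exists a constant c ≥ 1, depending only on ε and Φ, such that c⁻¹ t^ε ≤ Φ(t) ≤ c t^{−ε} for all t ∈ (0, 1]. -/
/-!
On `(0, t₀)` the hypothesis gives `|t Φ'(t)| ≤ ε Φ(t)` a.e. Hence the absolutely continuous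
functions `t ↦ Φ(t) t^ε` and `t ↦ Φ(t) t^(-ε)`, whose a.e. derivatives are
`t^(ε-1) (t Φ' + ε Φ) ≥ 0` and `t^(-ε-1) (t Φ' - ε Φ) ≤ 0`, are respectively increasing and
decreasing on `(0, b]` for some `b < t₀`; comparing with their values at `b` gives `t^ε` and
`t^(-ε)` bounds on `(0, b]`. On `[b, 1]` the positive continuous function `Φ` is bounded above
and away from zero by compactness.
-/

open MeasureTheory Set intervalIntegral

theorem AbsolutelyContinuousOnInterval.le_of_ae_deriv_nonneg {f : ℝ → ℝ} {a b : ℝ}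
    (hf : AbsolutelyContinuousOnInterval f a b) (hab : a ≤ b)
    (hderiv : ∀ᵐ x, x ∈ Icc a b → 0 ≤ deriv f x) : f a ≤ f b := by
  have h : 0 ≤ ∫ x in a..b, deriv f x :=
    integral_nonneg_of_ae_restrict hab ((ae_restrict_iff' measurableSet_Icc).2 hderiv)
  rw [hf.integral_deriv_eq_sub] at h
  linarith

theorem absolutelyContinuousOnInterval_const_add_integral {f' : ℝ → ℝ} {a b : ℝ} (c : ℝ)
    (hf' : IntervalIntegrable f' volume a b) :
    AbsolutelyContinuousOnInterval (fun x ↦ c + ∫ t in a..x, f' t) a b :=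
  contDiffOn_const.absolutelyContinuousOnInterval.fun_add
    (hf'.absolutelyContinuousOnInterval_intervalIntegral left_mem_uIcc)

theorem continuousOn_Icc_of_sub_eq_integral {f f' : ℝ → ℝ} {a b : ℝ}
    (hf' : IntervalIntegrable f' volume a b)
    (hf : ∀ x ∈ Icc a b, f x - f a = ∫ t in a..x, f' t) : ContinuousOn f (Icc a b) :=
  ((absolutelyContinuousOnInterval_const_add_integral (f a) hf').continuousOn.mono
    Icc_subset_uIcc).congr fun x hx ↦ by linarith [hf x hx]

theorem mul_rpow_le_mul_rpow_of_ae_nonneg {f f' : ℝ → ℝ} {a b p : ℝ} (ha : 0 < a)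
    (hab : a ≤ b) (hf' : IntervalIntegrable f' volume a b)
    (hf : ∀ x ∈ Icc a b, f x - f a = ∫ t in a..x, f' t)
    (hnonneg : ∀ᵐ x, x ∈ Icc a b → 0 ≤ p * f x + x * f' x) :
    f a * a ^ p ≤ f b * b ^ p := by
  have hprimitive : ∀ x ∈ Icc a b, f a + ∫ t in a..x, f' t = f x :=
    fun x hx ↦ by linarith [hf x hx]
  have hpow : AbsolutelyContinuousOnInterval (fun x : ℝ ↦ x ^ p) a b := by
    refine ContDiffOn.absolutelyContinuousOnInterval fun x hx ↦ ?_
    rw [uIcc_of_le hab] at hx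
    exact (Real.contDiffAt_rpow_const_of_ne (ha.trans_le hx.1).ne').contDiffWithinAt
  rw [← hprimitive a (left_mem_Icc.2 hab), ← hprimitive b (right_mem_Icc.2 hab)]
  refine ((absolutelyContinuousOnInterval_const_add_integral (f a) hf').fun_mul
    hpow).le_of_ae_deriv_nonneg hab ?_
  filter_upwards [hf'.ae_hasDerivAt_integral, hnonneg] with x hFx hx hxI
  have hx0 : 0 < x := ha.trans_le hxI.1
  have hxI' : x ∈ uIcc a b := Icc_subset_uIcc hxI
  have hderiv := ((hFx hxI' a left_mem_uIcc).const_add (f a)).fun_mul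
    (Real.hasDerivAt_rpow_const (p := p) (Or.inl hx0.ne'))
  rw [hderiv.deriv, hprimitive x hxI]
  have hsplit : x ^ p = x ^ (p - 1) * x := by
    rw [← Real.rpow_add_one hx0.ne']; ring_nf
  calc 0 ≤ x ^ (p - 1) * (p * f x + x * f' x) := mul_nonneg (by positivity) (hx hxI)
    _ = _ := by rw [hsplit]; ring

theorem rpow_bounds_of_ae_abs_mul_le {Φ DΦ : ℝ → ℝ} {s b ε : ℝ} (hs : 0 < s) (hsb : s ≤ b)
    (hInt : IntervalIntegrable DΦ volume s b)
    (hAC : ∀ x ∈ Icc s b, Φ x - Φ s = ∫ t in s..x, DΦ t)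
    (hbound : ∀ᵐ x, x ∈ Icc s b → |x * DΦ x| ≤ ε * Φ x) :
    Φ b * b ^ (-ε) * s ^ ε ≤ Φ s ∧ Φ s ≤ Φ b * b ^ ε * s ^ (-ε) := by
  have hlower := mul_rpow_le_mul_rpow_of_ae_nonneg (f := -Φ) (p := -ε) hs hsb hInt.neg
    (fun x hx ↦ by simp only [Pi.neg_apply, intervalIntegral.integral_neg]; linarith [hAC x hx])
    (hbound.mono fun x hx hxI ↦ by
      simp only [Pi.neg_apply]; linarith [le_abs_self (x * DΦ x), hx hxI])
  have hupper := mul_rpow_le_mul_rpow_of_ae_nonneg (p := ε) hs hsb hInt hAC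
    (hbound.mono fun x hx hxI ↦ by linarith [neg_abs_le (x * DΦ x), hx hxI])
  have hsε : 0 < s ^ ε := Real.rpow_pos_of_pos hs ε
  simp only [Pi.neg_apply, neg_mul, neg_le_neg_iff, Real.rpow_neg hs.le] at hlower hupper ⊢
  constructor
  · rw [← le_div_iff₀ hsε]; simpa [div_eq_mul_inv] using hlower
  · rw [← div_eq_mul_inv, le_div_iff₀ hsε]; exact hupper

theorem exists_rpow_bounds_of_continuousOn_Icc {f : ℝ → ℝ} {b ε A B : ℝ} (hb1 : b ≤ 1)
    (hε : 0 ≤ ε) (hA : 0 < A) (hf : ContinuousOn f (Icc b 1))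
    (hfpos : ∀ t ∈ Icc b 1, 0 < f t)
    (hsmall : ∀ t ∈ Ioc 0 b, A * t ^ ε ≤ f t ∧ f t ≤ B * t ^ (-ε)) :
    ∃ A' > 0, ∃ B', ∀ t ∈ Ioc 0 1, A' * t ^ ε ≤ f t ∧ f t ≤ B' * t ^ (-ε) := by
  obtain ⟨p, hp, hpmin⟩ := isCompact_Icc.exists_isMinOn (nonempty_Icc.2 hb1) hf
  obtain ⟨q, hq, hqmax⟩ := isCompact_Icc.exists_isMaxOn (nonempty_Icc.2 hb1) hf
  have hm : 0 < min A (f p) := lt_min hA (hfpos p hp)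
  refine ⟨min A (f p), hm, max B (f q), fun t ⟨ht0, ht1⟩ ↦ ?_⟩
  have htε : 0 < t ^ ε := Real.rpow_pos_of_pos ht0 ε
  have htnε : 0 < t ^ (-ε) := Real.rpow_pos_of_pos ht0 (-ε)
  rcases le_or_gt t b with htb | hbt
  · obtain ⟨hlow, hup⟩ := hsmall t ⟨ht0, htb⟩
    constructor
    · exact le_trans (mul_le_mul_of_nonneg_right (min_le_left _ _) htε.le) hlow
    · exact hup.trans (mul_le_mul_of_nonneg_right (le_max_left _ _) htnε.le)
  · have htI : t ∈ Icc b 1 := ⟨hbt.le, ht1⟩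
    have hM : f q ≤ max B (f q) := le_max_right _ _
    constructor
    · calc min A (f p) * t ^ ε ≤ min A (f p) :=
            mul_le_of_le_one_right hm.le (Real.rpow_le_one ht0.le ht1 hε)
        _ ≤ f p := min_le_right _ _
        _ ≤ f t := hpmin htI
    · calc f t ≤ f q := hqmax htI
        _ ≤ max B (f q) := hM
        _ ≤ max B (f q) * t ^ (-ε) := le_mul_of_one_le_right ((hfpos q hq).le.trans hM)
            (Real.one_le_rpow_of_pos_of_le_one_of_nonpos ht0 ht1 (neg_nonpos.2 hε))

theorem exists_one_le_of_rpow_bounds {f : ℝ → ℝ} {ε A B : ℝ} (hA : 0 < A)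
    (h : ∀ t ∈ Ioc 0 1, A * t ^ ε ≤ f t ∧ f t ≤ B * t ^ (-ε)) :
    ∃ c : ℝ, 1 ≤ c ∧ ∀ t ∈ Ioc (0 : ℝ) 1, c⁻¹ * t ^ ε ≤ f t ∧ f t ≤ c * t ^ (-ε) := by
  refine ⟨max 1 (max A⁻¹ B), le_max_left _ _, fun t ht ↦ ?_⟩
  have hc : A⁻¹ ≤ max 1 (max A⁻¹ B) := (le_max_left _ _).trans (le_max_right _ _)
  have hcA : (max 1 (max A⁻¹ B))⁻¹ ≤ A := inv_le_of_inv_le₀ hA hc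
  obtain ⟨hlow, hup⟩ := h t ht
  constructor
  · exact (mul_le_mul_of_nonneg_right hcA (Real.rpow_nonneg ht.1.le ε)).trans hlow
  · exact hup.trans (mul_le_mul_of_nonneg_right ((le_max_right _ _).trans (le_max_right _ _))
      (Real.rpow_nonneg ht.1.le (-ε)))

/-- If `Φ : (0,∞) → (0,∞)` is locally absolutely continuous (with a.e.
derivative `DΦ`, encoded by the integral representation below) and `t·Φ'(t)/Φ(t) → 0`
as `t → 0⁺`, then for every `ε > 0` there is `c ≥ 1` with
`c⁻¹ t^ε ≤ Φ(t) ≤ c t^(−ε)` for all `t ∈ (0,1]`. -/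
theorem statement1 (Φ DΦ : ℝ → ℝ)
    (hpos : ∀ t : ℝ, 0 < t → 0 < Φ t)
    (hInt : ∀ s t : ℝ, 0 < s → s ≤ t → IntervalIntegrable DΦ volume s t)
    (hAC : ∀ s t : ℝ, 0 < s → s ≤ t → Φ t - Φ s = ∫ x in s..t, DΦ x)
    (hlim : ∀ η : ℝ, 0 < η → ∃ t₀ : ℝ, 0 < t₀ ∧
      ∀ᵐ t ∂(volume.restrict (Set.Ioo (0 : ℝ) t₀)), |t * DΦ t| ≤ η * Φ t) :
    ∀ ε : ℝ, 0 < ε → ∃ c : ℝ, 1 ≤ c ∧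
      ∀ t ∈ Set.Ioc (0 : ℝ) 1, c⁻¹ * t ^ ε ≤ Φ t ∧ Φ t ≤ c * t ^ (-ε) := by
  intro ε hε
  obtain ⟨t₀, ht₀, hbound⟩ := hlim ε hε
  set b := min (t₀ / 2) 1
  have hb : 0 < b := lt_min (half_pos ht₀) one_pos
  have hbt₀ : b < t₀ := (min_le_left _ _).trans_lt (half_lt_self ht₀)
  have hsmall : ∀ t ∈ Ioc 0 b, Φ b * b ^ (-ε) * t ^ ε ≤ Φ t ∧ Φ t ≤ Φ b * b ^ ε * t ^ (-ε) :=
    fun t ⟨ht0, htb⟩ ↦ rpow_bounds_of_ae_abs_mul_le ht0 htb (hInt t b ht0 htb)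
      (fun x hx ↦ hAC t x ht0 hx.1)
      (((ae_restrict_iff' measurableSet_Ioo).1 hbound).mono fun x hx hxI ↦
        hx ⟨ht0.trans_le hxI.1, hxI.2.trans_lt hbt₀⟩)
  have hcont : ContinuousOn Φ (Icc b 1) :=
    continuousOn_Icc_of_sub_eq_integral (hInt b 1 hb (min_le_right _ _))
      fun x hx ↦ hAC b x hb hx.1
  obtain ⟨A, hA, B, hAB⟩ := exists_rpow_bounds_of_continuousOn_Icc (min_le_right _ _) hε.le
    (mul_pos (hpos b hb) (Real.rpow_pos_of_pos hb _)) hcont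
    (fun t ht ↦ hpos t (hb.trans_le ht.1)) hsmall
  exact exists_one_le_of_rpow_bounds hA hAB
end

section
/- Let Φ : (0, ∞) → (0, ∞) be locally absolutely continuous with a.e. derivative satisfying tΦ'(t)/Φ(t) → 0 as t → 0⁺, and let σ < 0. Then there exists a constant c > 0, depending only on σ and Φ, such that for every finite strictly increasing sequence k₀ < k₁ < ⋯ < k_l of nonnegative integers one has ∑_{j=0}^{l} 2^{σ k_j} Φ(2^{−k_j}) ≤ c · 2^{σ k₀} Φ(2^{−k₀}). -/
/-!
Write `f n = 2^(σ n) Φ(2^(-n))` and `r = 2^(σ/2) < 1`. Near `0` the logarithmic derivative of `Φ`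
is small, so `Φ` cannot change by more than a factor close to `1` on a dyadic interval
`[t/2, t]`: comparing with the maximum `M` of `Φ` there, `|Φ t - M| ≤ η M`, hence
`r Φ(t/2) ≤ Φ(t)` once `η = 1 - r`. This gives `f (n+1) ≤ r f n` for all large `n`, so
`f b ≤ C r^(b-a) f a` for all `a ≤ b`, and a sum over distinct `k_j ≥ k₀` is dominated by a geometric
series.
-/

open MeasureTheory Set

section Sequences

lemma exists_le_mul_of_antitoneOn_Ici {g : ℕ → ℝ} (hg : ∀ n, 0 < g n) {N : ℕ}
    (hanti : AntitoneOn g (Ici N)) : ∃ C, 0 < C ∧ ∀ a b, a ≤ b → g b ≤ C * g a := by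
  have hne : (Finset.range (N + 1)).Nonempty := Finset.nonempty_range_add_one
  set A := (Finset.range (N + 1)).sup' hne g
  set m := (Finset.range (N + 1)).inf' hne g
  have hm : 0 < m := (Finset.lt_inf'_iff hne).2 fun n _ => hg n
  refine ⟨max 1 (A / m), by positivity, fun a b hab => ?_⟩
  rcases le_total N a with hNa | haN
  · calc g b ≤ g a := hanti hNa (hNa.trans hab) hab
      _ ≤ max 1 (A / m) * g a := le_mul_of_one_le_left (hg a).le (le_max_left _ _)
  · have hbA : g b ≤ A := by
      rcases le_total b N with hbN | hNb
      · exact Finset.le_sup' g (Finset.mem_range_succ_iff.2 hbN)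
      · exact (hanti self_mem_Ici hNb hNb).trans (Finset.le_sup' g (Finset.self_mem_range_succ N))
    calc g b ≤ A / m * m := by rwa [div_mul_cancel₀ A hm.ne']
      _ ≤ max 1 (A / m) * g a :=
        mul_le_mul (le_max_right _ _) (Finset.inf'_le g (Finset.mem_range_succ_iff.2 haN))
          hm.le (by positivity)

lemma exists_le_mul_pow_mul_of_eventually_le_mul {f : ℕ → ℝ} (hf : ∀ n, 0 < f n) {r : ℝ}
    (hr : 0 < r) {N : ℕ} (hstep : ∀ n ≥ N, f (n + 1) ≤ r * f n) :
    ∃ C, 0 < C ∧ ∀ a b, a ≤ b → f b ≤ C * r ^ (b - a) * f a := by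
  have hanti : AntitoneOn (fun n => f n / r ^ n) (Ici N) :=
    antitoneOn_nat_Ici_of_succ_le fun n hn => by
      rw [div_le_div_iff₀ (pow_pos hr _) (pow_pos hr _), pow_succ]
      calc f (n + 1) * r ^ n ≤ r * f n * r ^ n :=
            mul_le_mul_of_nonneg_right (hstep n hn) (pow_pos hr n).le
        _ = f n * (r ^ n * r) := by ring
  obtain ⟨C, hC, hle⟩ :=
    exists_le_mul_of_antitoneOn_Ici (fun n => div_pos (hf n) (pow_pos hr n)) hanti
  refine ⟨C, hC, fun a b hab => ?_⟩
  calc f b ≤ C * (f a / r ^ a) * r ^ b := (div_le_iff₀ (pow_pos hr b)).1 (hle a b hab)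
    _ = C * r ^ (b - a) * f a := by rw [← pow_sub_mul_pow r hab]; field_simp

lemma sum_pow_le_inv_one_sub_of_injOn {ι : Type*} {s : Finset ι} {e : ι → ℕ} (he : InjOn e s)
    {r : ℝ} (hr0 : 0 ≤ r) (hr1 : r < 1) : ∑ i ∈ s, r ^ e i ≤ (1 - r)⁻¹ := by
  rw [← Finset.sum_image he]
  exact sum_le_hasSum _ (fun n _ => pow_nonneg hr0 n) (hasSum_geometric_of_lt_one hr0 hr1)

lemma exists_sum_strictMono_le_mul_of_eventually_le_mul {f : ℕ → ℝ} (hf : ∀ n, 0 < f n) {r : ℝ}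
    (hr0 : 0 < r) (hr1 : r < 1) {N : ℕ} (hstep : ∀ n ≥ N, f (n + 1) ≤ r * f n) :
    ∃ c, 0 < c ∧ ∀ (l : ℕ) (k : Fin (l + 1) → ℕ), StrictMono k →
      ∑ j, f (k j) ≤ c * f (k 0) := by
  obtain ⟨C, hC, hCf⟩ := exists_le_mul_pow_mul_of_eventually_le_mul hf hr0 hstep
  have h1r : 0 < 1 - r := sub_pos.2 hr1
  refine ⟨C * (1 - r)⁻¹, by positivity, fun l k hk => ?_⟩
  have hk0 : ∀ j, k 0 ≤ k j := fun j => hk.monotone (Fin.zero_le j)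
  have hinj : InjOn (fun j => k j - k 0) (Finset.univ : Finset (Fin (l + 1))) :=
    fun i _ j _ hij => hk.injective (by have := hk0 i; have := hk0 j; simp only at hij; omega)
  calc ∑ j, f (k j) ≤ ∑ j, C * f (k 0) * r ^ (k j - k 0) :=
        Finset.sum_le_sum fun j _ => (hCf _ _ (hk0 j)).trans_eq (by ring)
    _ = C * f (k 0) * ∑ j, r ^ (k j - k 0) := (Finset.mul_sum ..).symm
    _ ≤ C * f (k 0) * (1 - r)⁻¹ := mul_le_mul_of_nonneg_left
        (sum_pow_le_inv_one_sub_of_injOn hinj hr0.le hr1) (mul_pos hC (hf _)).le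
    _ = C * (1 - r)⁻¹ * f (k 0) := by ring

end Sequences

section Dyadic

lemma continuousOn_Icc_of_sub_eq_integral_s3 {F g : ℝ → ℝ} {a b : ℝ} (hab : a ≤ b)
    (hg : IntervalIntegrable g volume a b) (hF : ∀ x ∈ Icc a b, F x - F a = ∫ y in a..x, g y) :
    ContinuousOn F (Icc a b) := by
  have hprim := intervalIntegral.continuousOn_primitive_interval' hg
    (by rw [uIcc_of_le hab]; exact left_mem_Icc.2 hab)
  rw [uIcc_of_le hab] at hprim
  exact ((continuousOn_const (c := F a)).add hprim).congr fun x hx => eq_add_of_sub_eq' (hF x hx)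

lemma abs_integral_le_of_abs_mul_le {g : ℝ → ℝ} {u t K : ℝ} (hu : t / 2 ≤ u) (hut : u ≤ t)
    (hK : 0 ≤ K) (h : ∀ᵐ x, x ∈ Ioc u t → |x * g x| ≤ K) : |∫ x in u..t, g x| ≤ K := by
  have hbound : ∀ᵐ x, x ∈ uIoc u t → ‖g x‖ ≤ 2 * K / t := by
    filter_upwards [h] with x hx hxI
    rw [uIoc_of_le hut] at hxI
    have hx0 : 0 < x := by linarith [hxI.1, hxI.2]
    have hxK := hx hxI
    rw [abs_mul, abs_of_pos hx0] at hxK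
    rw [Real.norm_eq_abs, le_div_iff₀ (by linarith [hxI.1, hxI.2])]
    nlinarith [hxI.1, abs_nonneg (g x)]
  calc |∫ x in u..t, g x| ≤ 2 * K / t * |t - u| :=
        intervalIntegral.norm_integral_le_of_norm_le_const_ae hbound
    _ ≤ K := by
      rcases hut.eq_or_lt with rfl | hlt
      · simp [hK]
      rw [abs_of_nonneg (sub_nonneg.2 hut), div_mul_eq_mul_div, div_le_iff₀ (by linarith)]
      nlinarith

lemma mul_apply_half_le_of_abs_mul_deriv_le {Φ DΦ : ℝ → ℝ} {t η : ℝ} (ht : 0 < t) (hη : 0 ≤ η)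
    (hpos : ∀ t : ℝ, 0 < t → 0 < Φ t)
    (hInt : ∀ s t : ℝ, 0 < s → s ≤ t → IntervalIntegrable DΦ volume s t)
    (hAC : ∀ s t : ℝ, 0 < s → s ≤ t → Φ t - Φ s = ∫ x in s..t, DΦ x)
    (hbd : ∀ᵐ x, x ∈ Ioc (t / 2) t → |x * DΦ x| ≤ η * Φ x) :
    (1 - η) * Φ (t / 2) ≤ Φ t := by
  have ht2 : 0 < t / 2 := half_pos ht
  have hle : t / 2 ≤ t := half_le_self ht.le
  obtain ⟨u, hu, hmax⟩ := isCompact_Icc.exists_isMaxOn (nonempty_Icc.2 hle)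
    (continuousOn_Icc_of_sub_eq_integral_s3 hle (hInt _ _ ht2 hle) fun x hx => hAC _ _ ht2 hx.1)
  have hu0 : 0 < u := ht2.trans_le hu.1
  have hdev : |Φ t - Φ u| ≤ η * Φ u := by
    rw [hAC u t hu0 hu.2]
    refine abs_integral_le_of_abs_mul_le hu.1 hu.2 (mul_nonneg hη (hpos u hu0).le) ?_
    filter_upwards [hbd] with x hx hxI
    have hxIcc : x ∈ Icc (t / 2) t := ⟨hu.1.trans hxI.1.le, hxI.2⟩
    exact (hx ⟨hu.1.trans_lt hxI.1, hxI.2⟩).trans (mul_le_mul_of_nonneg_left (hmax hxIcc) hη)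
  have hhalf : Φ (t / 2) ≤ Φ u := hmax (left_mem_Icc.2 hle)
  have hlow : (1 - η) * Φ u ≤ Φ t := by linarith [(abs_le.1 hdev).1]
  rcases le_total η 1 with hη1 | hη1
  · nlinarith
  · nlinarith [hpos _ ht2, hpos _ ht]

end Dyadic

/-- For `Φ : (0,∞) → (0,∞)` locally absolutely continuous with
`t·Φ'(t)/Φ(t) → 0` as `t → 0⁺` and `σ < 0`, the sum `∑_j 2^(σ k_j) Φ(2^(−k_j))` over a
strictly increasing finite sequence of nonnegative integers is bounded by a constant
(depending only on `σ`, `Φ`) times the first term. -/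
theorem statement3 (Φ DΦ : ℝ → ℝ)
    (hpos : ∀ t : ℝ, 0 < t → 0 < Φ t)
    (hInt : ∀ s t : ℝ, 0 < s → s ≤ t → IntervalIntegrable DΦ volume s t)
    (hAC : ∀ s t : ℝ, 0 < s → s ≤ t → Φ t - Φ s = ∫ x in s..t, DΦ x)
    (hlim : ∀ η : ℝ, 0 < η → ∃ t₀ : ℝ, 0 < t₀ ∧
      ∀ᵐ t ∂(volume.restrict (Set.Ioo (0 : ℝ) t₀)), |t * DΦ t| ≤ η * Φ t)
    (σ : ℝ) (hσ : σ < 0) :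
    ∃ c : ℝ, 0 < c ∧ ∀ (l : ℕ) (k : Fin (l + 1) → ℕ), StrictMono k →
      ∑ j : Fin (l + 1), (2 : ℝ) ^ (σ * (k j : ℝ)) * Φ ((2 : ℝ) ^ (-(k j : ℝ)))
        ≤ c * ((2 : ℝ) ^ (σ * (k 0 : ℝ)) * Φ ((2 : ℝ) ^ (-(k 0 : ℝ)))) := by
  set r : ℝ := 2 ^ (σ / 2) with hr
  have hr0 : 0 < r := by positivity
  have hr1 : r < 1 := Real.rpow_lt_one_of_one_lt_of_neg one_lt_two (by linarith)
  obtain ⟨t₀, ht₀, hbd⟩ := hlim (1 - r) (sub_pos.2 hr1)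
  obtain ⟨N, hN⟩ := exists_pow_lt_of_lt_one ht₀ (by norm_num : (2⁻¹ : ℝ) < 1)
  set f : ℕ → ℝ := fun n => (2 : ℝ) ^ (σ * n) * Φ (2 ^ (-(n : ℝ)))
  have hf : ∀ n : ℕ, f n = r ^ (2 * n) * Φ (2⁻¹ ^ n) := fun n => by
    change (2 : ℝ) ^ (σ * n) * Φ (2 ^ (-(n : ℝ))) = _
    rw [Real.rpow_neg zero_le_two, Real.rpow_natCast, inv_pow, hr,
      ← Real.rpow_mul_natCast zero_le_two]
    push_cast
    ring_nf
  have hstep : ∀ n ≥ N, f (n + 1) ≤ r * f n := by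
    intro n hn
    set t : ℝ := 2⁻¹ ^ n
    have ht : 0 < t := by positivity
    have ht₀ : t < t₀ := (pow_le_pow_of_le_one (by norm_num) (by norm_num) hn).trans_lt hN
    have hhalf : r * Φ (t / 2) ≤ Φ t := by
      simpa using mul_apply_half_le_of_abs_mul_deriv_le ht (sub_pos.2 hr1).le hpos hInt hAC (by
        filter_upwards [(ae_restrict_iff' measurableSet_Ioo).1 hbd] with x hx hxI
        exact hx ⟨(half_pos ht).trans hxI.1, hxI.2.trans_lt ht₀⟩)
    calc f (n + 1) = r * r ^ (2 * n) * (r * Φ (t / 2)) := by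
          rw [hf, pow_succ, ← div_eq_mul_inv, mul_add, pow_add]; ring
      _ ≤ r * r ^ (2 * n) * Φ t := by gcongr
      _ = r * f n := by rw [hf]; ring
  have hfpos : ∀ n, 0 < f n := fun n => by
    rw [hf]; exact mul_pos (by positivity) (hpos _ (by positivity))
  exact exists_sum_strictMono_le_mul_of_eventually_le_mul hfpos hr0 hr1 hstep
end

section
/- Let ρ : (0, ∞) → (0, ∞) be locally absolutely continuous with a.e. derivative satisfying yρ'(y)/ρ(y) → 0 as y → ∞, and let μ < −1. Then there exists a constant c > 0, depending only on μ and ρ, such that for every finite strictly increasing sequence 1 ≤ k₀ < k₁ < ⋯ < k_l of positive integers one has ∑_{j=0}^{l} k_j^{μ} ρ(k_j) ≤ c · k₀^{1+μ} ρ(k₀). -/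
/-!
Since `y ρ'(y) / ρ(y) → 0`, for every `η > 0` eventually `y ρ' ≤ η ρ`. Comparing `ρ` with the
solution of `F' = η F / y` (a Gronwall argument) shows that `ρ(t) t^(-η)` is nonincreasing for
large `t`, and compactness of the remaining interval gives `ρ(t) t^(-η) ≤ C ρ(s) s^(-η)` for all
`1 ≤ s ≤ t`. With `η = (-1 - μ)/2` this bounds `k_j^μ ρ(k_j)` by `C ρ(k₀) k₀^(-η) k_j^(μ+η)`, where
`μ + η < -1`, and the tail sum of `n^(μ+η)` from `k₀` on is `O(k₀^(1+μ+η))` by comparison with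
the integral.
-/

open MeasureTheory Set

lemma continuousOn_Icc_of_sub_eq_integral_s5 {ρ Dρ : ℝ → ℝ} {a b : ℝ} (hab : a ≤ b)
    (hD : IntervalIntegrable Dρ volume a b) (hρ : ∀ x ∈ Icc a b, ρ x - ρ a = ∫ u in a..x, Dρ u) :
    ContinuousOn ρ (Icc a b) := by
  have h := intervalIntegral.continuousOn_primitive_interval' hD left_mem_uIcc
  rw [uIcc_of_le hab] at h
  exact ((continuousOn_const (c := ρ a)).add h).congr fun x hx => eq_add_of_sub_eq' (hρ x hx)

lemma antitoneOn_mul_rpow_neg_of_le_primitive {g : ℝ → ℝ} {c η s t : ℝ} (hη : 0 ≤ η)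
    (hs : 0 < s) (hg : ContinuousOn g (Icc s t))
    (hgF : ∀ x ∈ Icc s t, g x ≤ c + η * ∫ u in s..x, g u / u) :
    AntitoneOn (fun x => (c + η * ∫ u in s..x, g u / u) * x ^ (-η)) (Icc s t) := by
  set F := fun x => c + η * ∫ u in s..x, g u / u
  have hpos : ∀ x ∈ Icc s t, 0 < x := fun x hx => hs.trans_le hx.1
  have hquot : ContinuousOn (fun u => g u / u) (Icc s t) :=
    hg.div continuousOn_id fun x hx => (hpos x hx).ne'
  have hF : ContinuousOn F (Icc s t) := by
    rcases le_total s t with hst | hts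
    · have h := intervalIntegral.continuousOn_primitive_interval'
        (hquot.intervalIntegrable_of_Icc (μ := volume) hst) left_mem_uIcc
      rw [uIcc_of_le hst] at h
      exact continuousOn_const.add (h.const_smul η)
    · exact (subsingleton_Icc_of_ge hts).continuousOn F
  have hderiv : ∀ x ∈ Ioo s t, HasDerivAt (fun x => F x * x ^ (-η))
      (η * (g x / x) * x ^ (-η) + F x * (-η * x ^ (-η - 1))) x := by
    intro x hx
    have hF' : HasDerivAt F (η * (g x / x)) x :=
      ((intervalIntegral.integral_hasDerivAt_right
        ((hquot.mono (Icc_subset_Icc_right hx.2.le)).intervalIntegrable_of_Icc hx.1.le)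
        ((hquot.mono Ioo_subset_Icc_self).stronglyMeasurableAtFilter isOpen_Ioo x hx)
        (hquot.continuousAt (Icc_mem_nhds hx.1 hx.2))).const_mul η).const_add c
    exact hF'.mul (Real.hasDerivAt_rpow_const (Or.inl (hs.trans hx.1).ne'))
  refine antitoneOn_of_hasDerivWithinAt_nonpos (convex_Icc s t)
    (hF.mul fun x hx =>
      (Real.continuousAt_rpow_const _ _ (Or.inl (hpos x hx).ne')).continuousWithinAt)
    (fun x hx => by rw [interior_Icc] at hx; exact (hderiv x hx).hasDerivWithinAt) ?_
  rw [interior_Icc]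
  intro x hx
  have hx0 : 0 < x := hs.trans hx.1
  have hsplit : x ^ (-η) = x ^ (-η - 1) * x := by
    rw [← Real.rpow_add_one hx0.ne']; ring_nf
  have hderiv_eq : η * (g x / x) * x ^ (-η) + F x * (-η * x ^ (-η - 1))
      = η * x ^ (-η - 1) * (g x - F x) := by
    rw [hsplit]; field_simp; ring
  rw [hderiv_eq]
  exact mul_nonpos_of_nonneg_of_nonpos (by positivity)
    (sub_nonpos.2 (hgF x (Ioo_subset_Icc_self hx)))

lemma mul_rpow_neg_le_of_ae_mul_deriv_le {ρ Dρ : ℝ → ℝ} {η s t : ℝ} (hη : 0 ≤ η) (hs : 0 < s)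
    (hst : s ≤ t) (hD : IntervalIntegrable Dρ volume s t)
    (hρ : ∀ x ∈ Icc s t, ρ x - ρ s = ∫ u in s..x, Dρ u)
    (hDρ : ∀ᵐ y ∂volume.restrict (Ioc s t), y * Dρ y ≤ η * ρ y) :
    ρ t * t ^ (-η) ≤ ρ s * s ^ (-η) := by
  have hquot : ContinuousOn (fun u => ρ u / u) (Icc s t) :=
    (continuousOn_Icc_of_sub_eq_integral_s5 hst hD hρ).div continuousOn_id
      fun x hx => (hs.trans_le hx.1).ne'
  have hle : ∀ x ∈ Icc s t, ρ x ≤ ρ s + η * ∫ u in s..x, ρ u / u := by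
    intro x hx
    have hmono : ∫ u in s..x, Dρ u ≤ ∫ u in s..x, η * (ρ u / u) := by
      refine intervalIntegral.integral_mono_ae_restrict hx.1 (hD.mono_set ?_)
        ((hquot.mono (Icc_subset_Icc_right hx.2)).intervalIntegrable_of_Icc hx.1 |>.const_mul η) ?_
      · rw [uIcc_of_le hx.1, uIcc_of_le hst]; exact Icc_subset_Icc_right hx.2
      rw [Measure.restrict_congr_set Ioc_ae_eq_Icc.symm]
      filter_upwards [ae_restrict_of_ae_restrict_of_subset (Ioc_subset_Ioc_right hx.2) hDρ,
        ae_restrict_mem measurableSet_Ioc] with y hy hymem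
      rw [mul_div_assoc', le_div_iff₀ (hs.trans hymem.1)]
      linarith
    rw [intervalIntegral.integral_const_mul] at hmono
    linarith [hρ x hx]
  have ht : t ∈ Icc s t := right_mem_Icc.2 hst
  calc ρ t * t ^ (-η) ≤ (ρ s + η * ∫ u in s..t, ρ u / u) * t ^ (-η) :=
        mul_le_mul_of_nonneg_right (hle t ht) (Real.rpow_nonneg (hs.le.trans hst) _)
    _ ≤ (ρ s + η * ∫ u in s..s, ρ u / u) * s ^ (-η) :=
        antitoneOn_mul_rpow_neg_of_le_primitive hη hs
          (continuousOn_Icc_of_sub_eq_integral_s5 hst hD hρ) hle (left_mem_Icc.2 hst) ht hst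
    _ = ρ s * s ^ (-η) := by simp

lemma exists_mul_rpow_neg_le {ρ Dρ : ℝ → ℝ} {η y₀ : ℝ} (hη : 0 ≤ η)
    (hpos : ∀ t : ℝ, 0 < t → 0 < ρ t)
    (hInt : ∀ s t : ℝ, 0 < s → s ≤ t → IntervalIntegrable Dρ volume s t)
    (hAC : ∀ s t : ℝ, 0 < s → s ≤ t → ρ t - ρ s = ∫ x in s..t, Dρ x)
    (hy₀ : ∀ᵐ y ∂volume.restrict (Ioi y₀), y * Dρ y ≤ η * ρ y) :
    ∃ C > 0, ∀ s t : ℝ, 1 ≤ s → s ≤ t → ρ t * t ^ (-η) ≤ C * (ρ s * s ^ (-η)) := by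
  set h := fun x => ρ x * x ^ (-η)
  set a := max y₀ 1
  have ha : 1 ≤ a := le_max_right _ _
  have hh : ∀ x, 0 < x → 0 < h x := fun x hx => mul_pos (hpos x hx) (Real.rpow_pos_of_pos hx _)
  have htail : ∀ s t, a ≤ s → s ≤ t → h t ≤ h s := fun s t has hst =>
    have hs : 0 < s := one_pos.trans_le (ha.trans has)
    mul_rpow_neg_le_of_ae_mul_deriv_le hη hs hst (hInt s t hs hst)
      (fun x hx => hAC s x hs hx.1)
      (ae_restrict_of_ae_restrict_of_subset
        (fun y hy => (le_max_left y₀ 1).trans_lt (has.trans_lt hy.1)) hy₀)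
  have hcont : ContinuousOn h (Icc 1 a) :=
    (continuousOn_Icc_of_sub_eq_integral_s5 ha (hInt 1 a one_pos ha)
      fun x hx => hAC 1 x one_pos hx.1).mul fun x hx =>
        (Real.continuousAt_rpow_const _ _ (Or.inl (one_pos.trans_le hx.1).ne')).continuousWithinAt
  obtain ⟨xM, hxM, hM⟩ := isCompact_Icc.exists_isMaxOn (nonempty_Icc.2 ha) hcont
  obtain ⟨xm, hxm, hm⟩ := isCompact_Icc.exists_isMinOn (nonempty_Icc.2 ha) hcont
  have hxm0 : 0 < h xm := hh xm (one_pos.trans_le hxm.1)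
  have hmax : ∀ t, 1 ≤ t → h t ≤ h xM := by
    intro t ht
    rcases le_total t a with hta | hat
    · exact hM ⟨ht, hta⟩
    · exact (htail a t le_rfl hat).trans (hM ⟨ha, le_rfl⟩)
  have hC : 1 ≤ h xM / h xm := (one_le_div hxm0).2 (hm hxM)
  refine ⟨h xM / h xm, div_pos (hh xM (one_pos.trans_le hxM.1)) hxm0, ?_⟩
  intro s t hs hst
  rcases le_total a s with has | hsa
  · exact (htail s t has hst).trans (le_mul_of_one_le_left (hh s (one_pos.trans_le hs)).le hC)
  · calc h t ≤ h xM := hmax t (hs.trans hst)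
      _ = h xM / h xm * h xm := (div_mul_cancel₀ _ hxm0.ne').symm
      _ ≤ h xM / h xm * h s := by gcongr; exact hm ⟨hs, hsa⟩

lemma sum_range_add_rpow_le {σ m : ℝ} (hσ : σ < -1) (hm : 0 < m) (N : ℕ) :
    ∑ i ∈ Finset.range (N + 1), (m + i) ^ σ ≤ m ^ σ + m ^ (σ + 1) / (-σ - 1) := by
  have hanti : AntitoneOn (fun x : ℝ => x ^ σ) (Icc m (m + N)) := fun x hx y _ hxy =>
    Real.rpow_le_rpow_of_nonpos (hm.trans_le hx.1) hxy (by linarith)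
  have h0 : (0 : ℝ) ∉ uIcc m (m + N) := by
    rw [uIcc_of_le (by simp)]; exact fun h => hm.not_ge h.1
  have hint : ∫ x in m..m + N, x ^ σ ≤ m ^ (σ + 1) / (-σ - 1) := by
    have : 0 < (m + N) ^ (σ + 1) := by positivity
    rw [integral_rpow (Or.inr ⟨by linarith, h0⟩), ← neg_div_neg_eq]
    gcongr <;> linarith
  rw [Finset.sum_range_succ', Nat.cast_zero, add_zero, add_comm]
  gcongr
  exact hanti.sum_le_integral.trans hint

lemma sum_natCast_rpow_le {σ : ℝ} (hσ : σ < -1) {m : ℕ} (hm : 1 ≤ m) {S : Finset ℕ}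
    (hS : ∀ n ∈ S, m ≤ n) :
    ∑ n ∈ S, (n : ℝ) ^ σ ≤ (1 + 1 / (-σ - 1)) * (m : ℝ) ^ (σ + 1) := by
  have hm' : (1 : ℝ) ≤ m := by exact_mod_cast hm
  have hsub : S ⊆ Finset.Ico m (m + (S.sup id + 1)) := fun n hn =>
    Finset.mem_Ico.2 ⟨hS n hn, by have := Finset.le_sup (f := id) hn; simp only [id] at this; omega⟩
  calc ∑ n ∈ S, (n : ℝ) ^ σ
      ≤ ∑ n ∈ Finset.Ico m (m + (S.sup id + 1)), (n : ℝ) ^ σ :=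
        Finset.sum_le_sum_of_subset_of_nonneg hsub fun _ _ _ => by positivity
    _ = ∑ i ∈ Finset.range (S.sup id + 1), ((m : ℝ) + i) ^ σ := by
        simp [Finset.sum_Ico_eq_sum_range]
    _ ≤ (m : ℝ) ^ σ + (m : ℝ) ^ (σ + 1) / (-σ - 1) := sum_range_add_rpow_le hσ (by positivity) _
    _ ≤ (m : ℝ) ^ (σ + 1) + (m : ℝ) ^ (σ + 1) / (-σ - 1) := by
        gcongr; linarith
    _ = (1 + 1 / (-σ - 1)) * (m : ℝ) ^ (σ + 1) := by ring

lemma sum_rpow_mul_le_of_mul_rpow_neg_le {ρ : ℝ → ℝ} {μ η C : ℝ} (hμη : μ + η < -1)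
    (hC : 0 ≤ C) (hρ0 : ∀ t : ℝ, 0 < t → 0 ≤ ρ t)
    (hρ : ∀ s t : ℝ, 1 ≤ s → s ≤ t → ρ t * t ^ (-η) ≤ C * (ρ s * s ^ (-η)))
    {l : ℕ} {k : Fin (l + 1) → ℕ} (hk : StrictMono k) (hk0 : 1 ≤ k 0) :
    ∑ j, (k j : ℝ) ^ μ * ρ (k j)
      ≤ C * (1 + 1 / (-(μ + η) - 1)) * ((k 0 : ℝ) ^ (1 + μ) * ρ (k 0)) := by
  have hm1 : (1 : ℝ) ≤ k 0 := by exact_mod_cast hk0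
  have hm : (0 : ℝ) < k 0 := one_pos.trans_le hm1
  have hk_ge : ∀ j, k 0 ≤ k j := fun j => hk.monotone (Fin.zero_le j)
  set A := C * (ρ (k 0) * (k 0 : ℝ) ^ (-η))
  have hterm : ∀ j, (k j : ℝ) ^ μ * ρ (k j) ≤ A * (k j : ℝ) ^ (μ + η) := by
    intro j
    have hkj : (k 0 : ℝ) ≤ k j := by exact_mod_cast hk_ge j
    have hsplit : (k j : ℝ) ^ μ = (k j : ℝ) ^ (-η) * (k j : ℝ) ^ (μ + η) := by
      rw [← Real.rpow_add (hm.trans_le hkj)]; ring_nf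
    rw [hsplit, mul_comm, ← mul_assoc]
    gcongr
    exact hρ _ _ hm1 hkj
  have hA : 0 ≤ A := mul_nonneg hC (mul_nonneg (hρ0 _ hm) (Real.rpow_nonneg hm.le _))
  calc ∑ j, (k j : ℝ) ^ μ * ρ (k j)
      ≤ ∑ j, A * (k j : ℝ) ^ (μ + η) := Finset.sum_le_sum fun j _ => hterm j
    _ = A * ∑ n ∈ Finset.univ.image k, (n : ℝ) ^ (μ + η) := by
        rw [Finset.sum_image hk.injective.injOn, Finset.mul_sum]
    _ ≤ A * ((1 + 1 / (-(μ + η) - 1)) * (k 0 : ℝ) ^ (μ + η + 1)) := by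
        gcongr
        refine sum_natCast_rpow_le hμη hk0 fun n hn => ?_
        obtain ⟨j, -, rfl⟩ := Finset.mem_image.1 hn
        exact hk_ge j
    _ = C * (1 + 1 / (-(μ + η) - 1)) * ((k 0 : ℝ) ^ (1 + μ) * ρ (k 0)) := by
        have hpow : (k 0 : ℝ) ^ (-η) * (k 0 : ℝ) ^ (μ + η + 1) = (k 0 : ℝ) ^ (1 + μ) := by
          rw [← Real.rpow_add hm]; ring_nf
        linear_combination C * (1 + 1 / (-(μ + η) - 1)) * ρ (k 0) * hpow

/-- For `ρ : (0,∞) → (0,∞)` locally absolutely continuous with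
`y·ρ'(y)/ρ(y) → 0` as `y → ∞` and `μ < −1`, the sum `∑_j k_j^μ ρ(k_j)` over a strictly
increasing finite sequence of positive integers is bounded by
`c · k₀^(1+μ) ρ(k₀)` with `c` depending only on `μ` and `ρ`. -/
theorem statement5 (ρ Dρ : ℝ → ℝ)
    (hpos : ∀ t : ℝ, 0 < t → 0 < ρ t)
    (hInt : ∀ s t : ℝ, 0 < s → s ≤ t → IntervalIntegrable Dρ volume s t)
    (hAC : ∀ s t : ℝ, 0 < s → s ≤ t → ρ t - ρ s = ∫ x in s..t, Dρ x)
    (hlim : ∀ η : ℝ, 0 < η → ∃ y₀ : ℝ, 0 < y₀ ∧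
      ∀ᵐ y ∂(volume.restrict (Set.Ioi y₀)), |y * Dρ y| ≤ η * ρ y)
    (μ : ℝ) (hμ : μ < -1) :
    ∃ c : ℝ, 0 < c ∧ ∀ (l : ℕ) (k : Fin (l + 1) → ℕ), StrictMono k → 1 ≤ k 0 →
      ∑ j : Fin (l + 1), (k j : ℝ) ^ μ * ρ (k j)
        ≤ c * ((k 0 : ℝ) ^ (1 + μ) * ρ (k 0)) := by
  have hη : 0 < (-1 - μ) / 2 := by linarith
  have hμη : μ + (-1 - μ) / 2 < -1 := by linarith
  obtain ⟨y₀, -, hy₀⟩ := hlim _ hη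
  obtain ⟨C, hC, hρ⟩ := exists_mul_rpow_neg_le hη.le hpos hInt hAC
    (hy₀.mono fun y hy => (le_abs_self _).trans hy)
  have hσ : 0 < -(μ + (-1 - μ) / 2) - 1 := by linarith
  exact ⟨_, by positivity, fun l k hk hk0 =>
    sum_rpow_mul_le_of_mul_rpow_neg_le hμη hC.le (fun t ht => (hpos t ht).le) hρ hk hk0⟩
end

section
/- Let 1 < p < ∞ with p' = p/(p−1), let (V, ≤) be a finite rooted tree with weight u : V → (0, ∞), let ξ* ∈ V have immediate successors ξ₁, …, ξ_m (m ≥ 1), let D_j ∈ J'_{ξ_j} for 1 ≤ j ≤ m, and set D = {ξ*} ∪ D₁ ∪ ⋯ ∪ D_m. Then β_D^{−p'} = u(ξ*)^{p'} + (∑_{j=1}^{m} β_{D_j}^{p})^{−p'/p}. -/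
open scoped Classical

noncomputable section

/-- A finite partial order is a rooted tree if it has a least element (the root) and
for every `ξ` the set of predecessors `{η | η ≤ ξ}` is linearly ordered. -/
def IsRootedTree (V : Type) [Fintype V] [PartialOrder V] : Prop :=
  (∃ ξ₀ : V, ∀ ξ : V, ξ₀ ≤ ξ) ∧
  ∀ ξ η₁ η₂ : V, η₁ ≤ ξ → η₂ ≤ ξ → η₁ ≤ η₂ ∨ η₂ ≤ η₁

/-- The depth of a vertex: the number of its strict predecessors. -/
def treeDepth {V : Type} [PartialOrder V] (ξ : V) : ℕ :=
  Nat.card {η : V // η < ξ}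

/-- The least constant `C ≥ 0` in the discrete two-weight Hardy-type inequality
`(∑_{ξ ≥ ξs} w(ξ)^q (∑_{ξs ≤ ξ' ≤ ξ} u(ξ') f(ξ'))^q)^{1/q} ≤ C (∑_{ξ ≥ ξs} f(ξ)^p)^{1/p}`
over all nonnegative `f`. -/
def SconstPQ {V : Type} [Fintype V] [PartialOrder V]
    (p q : ℝ) (u w : V → ℝ) (ξs : V) : ℝ :=
  sInf {C : ℝ | 0 ≤ C ∧ ∀ f : V → ℝ, (∀ ξ : V, 0 ≤ f ξ) →
    (∑ ξ ∈ Finset.univ.filter (fun ξ : V => ξs ≤ ξ),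
        w ξ ^ q * (∑ ξ' ∈ Finset.univ.filter (fun ξ' : V => ξs ≤ ξ' ∧ ξ' ≤ ξ),
          u ξ' * f ξ') ^ q) ^ (1 / q)
      ≤ C * (∑ ξ ∈ Finset.univ.filter (fun ξ : V => ξs ≤ ξ), f ξ ^ p) ^ (1 / p)}

/-- The family `J'_{ξs}`: subsets `D` of `{η | η ≥ ξs}` containing `ξs`, closed under
taking intermediate vertices, and such that every non-maximal element of `D` has all
of its immediate successors (in `V`) in `D`. -/
def Jfam {V : Type} [Fintype V] [PartialOrder V] (ξs : V) (D : Finset V) : Prop :=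
  ξs ∈ D ∧ (∀ ξ ∈ D, ξs ≤ ξ) ∧
  (∀ η ζ : V, ζ ∈ D → ξs ≤ η → η ≤ ζ → η ∈ D) ∧
  (∀ ξ ∈ D, (∃ ζ ∈ D, ξ < ζ) → ∀ η : V, ξ ⋖ η → η ∈ D)

/-- The quantity `β_D`: the infimum of `(∑_ξ |f(ξ)|^p)^{1/p}` over functions `f` with
`∑_{ξs ≤ ξ' ≤ ξ} f(ξ') u(ξ') = 1` for every maximal element `ξ` of `D`. -/
def betaD {V : Type} [Fintype V] [PartialOrder V]
    (p : ℝ) (u : V → ℝ) (ξs : V) (D : Finset V) : ℝ :=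
  sInf {b : ℝ | ∃ f : V → ℝ,
    (∀ ξ ∈ D, (∀ ζ ∈ D, ¬ ξ < ζ) →
      ∑ ξ' ∈ Finset.univ.filter (fun ξ' : V => ξs ≤ ξ' ∧ ξ' ≤ ξ), f ξ' * u ξ' = 1) ∧
    b = (∑ ξ : V, |f ξ| ^ p) ^ (1 / p)}

/-! Split an admissible `f` for `D` at the root, with `t = f(ξ*) u(ξ*)`. On the branch above
`ξ_j` the path sums of `f` equal `1 - t`, so `f / (1 - t)` restricted to that branch is admissible
for `D_j`; hence `‖f‖_p^p ≥ |t|^p u(ξ*)^{-p} + |1 - t|^p ∑_j β_{D_j}^p`. Conversely, nearly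
optimal functions for the `D_j`, scaled by `1 - t` and grafted onto the root value `t / u(ξ*)`,
are admissible for `D`. So `β_D^p` is the minimum over `t` of `|t|^p a + |1 - t|^p b` with
`a = u(ξ*)^{-p}`, `b = ∑_j β_{D_j}^p`, and the two-point Hölder inequality (with its equality
case) evaluates this minimum as `(a^{-p'/p} + b^{-p'/p})^{1-p}`. -/

open Finset Filter Topology

namespace Real.HolderConjugate

variable {p q x y : ℝ}

theorem rpow_one_sub_le_abs_rpow_mul_add (hpq : p.HolderConjugate q) (hx : 0 < x) (hy : 0 < y)
    (t : ℝ) :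
    (x ^ (-(q / p)) + y ^ (-(q / p))) ^ (1 - p) ≤ |t| ^ p * x + |1 - t| ^ p * y := by
  set E := |t| ^ p * x + |1 - t| ^ p * y
  set S := x ^ (-(q / p)) + y ^ (-(q / p))
  have hS : 0 < S := by positivity
  have hrpow : ∀ z : ℝ, 0 < z → (z ^ (1 / p)) ^ (-q) = z ^ (-(q / p)) := fun z hz => by
    rw [← Real.rpow_mul hz.le]; ring_nf
  have holder := Real.inner_le_Lp_mul_Lq univ ![t * x ^ (1 / p), (1 - t) * y ^ (1 / p)]
    ![(x ^ (1 / p))⁻¹, (y ^ (1 / p))⁻¹] hpq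
  simp only [Fin.sum_univ_two, Matrix.cons_val_zero, Matrix.cons_val_one] at holder
  have hinner : t * x ^ (1 / p) * (x ^ (1 / p))⁻¹ + (1 - t) * y ^ (1 / p) * (y ^ (1 / p))⁻¹
      = 1 := by
    field_simp; ring
  have hnormp : |t * x ^ (1 / p)| ^ p + |(1 - t) * y ^ (1 / p)| ^ p = E := by
    rw [abs_mul, abs_mul, abs_of_pos (Real.rpow_pos_of_pos hx _),
      abs_of_pos (Real.rpow_pos_of_pos hy _), Real.mul_rpow (abs_nonneg _) (by positivity),
      Real.mul_rpow (abs_nonneg _) (by positivity), one_div, Real.rpow_inv_rpow hx.le hpq.ne_zero,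
      Real.rpow_inv_rpow hy.le hpq.ne_zero]
  have hnormq : |(x ^ (1 / p))⁻¹| ^ q + |(y ^ (1 / p))⁻¹| ^ q = S := by
    rw [abs_of_pos (by positivity), abs_of_pos (by positivity), Real.inv_rpow (by positivity),
      Real.inv_rpow (by positivity), ← Real.rpow_neg (by positivity),
      ← Real.rpow_neg (by positivity), hrpow x hx, hrpow y hy]
  rw [hinner, hnormp, hnormq] at holder
  have h1 : 1 ≤ E * S ^ (p - 1) := by
    have := Real.rpow_le_rpow zero_le_one holder hpq.nonneg
    rwa [Real.one_rpow, Real.mul_rpow (by positivity) (by positivity), ← Real.rpow_mul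
      (by positivity), ← Real.rpow_mul hS.le, one_div_mul_cancel hpq.ne_zero, Real.rpow_one,
      one_div_mul_eq_div, hpq.div_conj_eq_sub_one] at this
  calc S ^ (1 - p) ≤ S ^ (1 - p) * (E * S ^ (p - 1)) := le_mul_of_one_le_right (by positivity) h1
    _ = E := by rw [mul_left_comm, ← Real.rpow_add hS]; simp

theorem exists_abs_rpow_mul_add_eq (hpq : p.HolderConjugate q) (hx : 0 < x) (hy : 0 < y) :
    ∃ t : ℝ, |t| ^ p * x + |1 - t| ^ p * y = (x ^ (-(q / p)) + y ^ (-(q / p))) ^ (1 - p) := by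
  set S := x ^ (-(q / p)) + y ^ (-(q / p))
  have hS : 0 < S := by positivity
  have hopt : ∀ z : ℝ, 0 < z → |z ^ (-(q / p)) / S| ^ p * z = z ^ (-(q / p)) / S ^ p := by
    intro z hz
    rw [abs_of_pos (by positivity), Real.div_rpow (by positivity) hS.le, div_mul_eq_mul_div,
      ← Real.rpow_mul hz.le, ← Real.rpow_add_one hz.ne']
    congr 2
    rw [neg_mul, div_mul_cancel₀ _ hpq.ne_zero, hpq.symm.div_conj_eq_sub_one]
    ring
  -- the equality case of the Hölder inequality in `rpow_one_sub_le_abs_rpow_mul_add`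
  refine ⟨x ^ (-(q / p)) / S, ?_⟩
  have h1t : 1 - x ^ (-(q / p)) / S = y ^ (-(q / p)) / S := by
    field_simp; ring
  rw [h1t, hopt x hx, hopt y hy, ← add_div, Real.rpow_sub hS, Real.rpow_one]

end Real.HolderConjugate

section PathSums

variable {V : Type} [Fintype V] [PartialOrder V]

def HasPathSum (u : V → ℝ) (ξs : V) (D : Finset V) (f : V → ℝ) (c : ℝ) : Prop :=
  ∀ ξ ∈ D, (∀ ζ ∈ D, ¬ ξ < ζ) →
    ∑ ξ' ∈ univ.filter (fun ξ' : V => ξs ≤ ξ' ∧ ξ' ≤ ξ), f ξ' * u ξ' = c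

variable {p : ℝ} {u : V → ℝ} {ξs : V} {D : Finset V} {f : V → ℝ} {c : ℝ}

theorem betaD_eq_sInf : betaD p u ξs D =
    sInf {b | ∃ f, HasPathSum u ξs D f 1 ∧ b = (∑ ξ, |f ξ| ^ p) ^ (1 / p)} := rfl

theorem HasPathSum.const_mul (h : HasPathSum u ξs D f c) (a : ℝ) :
    HasPathSum u ξs D (fun ξ => a * f ξ) (a * c) := by
  intro ξ hξ hmax
  simp only [mul_assoc, ← mul_sum, h ξ hξ hmax]

theorem hasPathSum_ite_root (hu : u ξs ≠ 0) (hD : ∀ ξ ∈ D, ξs ≤ ξ) :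
    HasPathSum u ξs D (fun ξ => if ξ = ξs then (u ξs)⁻¹ else 0) 1 := by
  intro ξ hξ _
  simp [ite_mul, hD ξ hξ, hu]

theorem betaD_nonneg : 0 ≤ betaD p u ξs D :=
  Real.sInf_nonneg (by rintro _ ⟨f, -, rfl⟩; positivity)

theorem betaD_le (hf : HasPathSum u ξs D f 1) :
    betaD p u ξs D ≤ (∑ ξ, |f ξ| ^ p) ^ (1 / p) :=
  csInf_le ⟨0, by rintro _ ⟨f, -, rfl⟩; positivity⟩ ⟨f, hf, rfl⟩

theorem betaD_rpow_le (hp : 0 < p) (hf : HasPathSum u ξs D f 1) :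
    betaD p u ξs D ^ p ≤ ∑ ξ, |f ξ| ^ p := by
  have := Real.rpow_le_rpow (betaD_nonneg (p := p)) (betaD_le (p := p) hf) hp.le
  rwa [one_div, Real.rpow_inv_rpow (by positivity) hp.ne'] at this

theorem le_betaD_rpow (hp : 0 < p) (hne : ∃ f, HasPathSum u ξs D f 1) (hc : 0 ≤ c)
    (h : ∀ f, HasPathSum u ξs D f 1 → c ≤ ∑ ξ, |f ξ| ^ p) : c ≤ betaD p u ξs D ^ p := by
  obtain ⟨f₀, hf₀⟩ := hne
  have hle : c ^ (1 / p) ≤ betaD p u ξs D := by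
    rw [betaD_eq_sInf]
    refine le_csInf ⟨_, f₀, hf₀, rfl⟩ ?_
    rintro _ ⟨f, hf, rfl⟩
    exact Real.rpow_le_rpow hc (h f hf) (by positivity)
  calc c = (c ^ (1 / p)) ^ p := by rw [one_div, Real.rpow_inv_rpow hc hp.ne']
    _ ≤ betaD p u ξs D ^ p := Real.rpow_le_rpow (by positivity) hle hp.le

theorem exists_hasPathSum_sum_rpow_lt (hp : 0 < p) (hne : ∃ f, HasPathSum u ξs D f 1)
    {ε : ℝ} (hε : 0 < ε) :
    ∃ f, HasPathSum u ξs D f 1 ∧ ∑ ξ, |f ξ| ^ p < betaD p u ξs D ^ p + ε := by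
  obtain ⟨f₀, hf₀⟩ := hne
  have hβ := betaD_nonneg (p := p) (u := u) (ξs := ξs) (D := D)
  have hlt : betaD p u ξs D < (betaD p u ξs D ^ p + ε) ^ (1 / p) := by
    calc betaD p u ξs D = (betaD p u ξs D ^ p) ^ (1 / p) := by
          rw [← Real.rpow_mul hβ, mul_one_div_cancel hp.ne', Real.rpow_one]
      _ < (betaD p u ξs D ^ p + ε) ^ (1 / p) :=
          Real.rpow_lt_rpow (by positivity) (by linarith) (by positivity)
  obtain ⟨_, ⟨f, hf, rfl⟩, hflt⟩ := exists_lt_of_csInf_lt (by exact ⟨_, f₀, hf₀, rfl⟩) hlt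
  exact ⟨f, hf, (Real.rpow_lt_rpow_iff (by positivity) (by positivity)
    (by positivity)).1 hflt⟩

theorem abs_rpow_mul_betaD_rpow_le (hp : 0 < p) (h : HasPathSum u ξs D f c) :
    |c| ^ p * betaD p u ξs D ^ p ≤ ∑ ξ ∈ univ.filter (ξs ≤ ·), |f ξ| ^ p := by
  rcases eq_or_ne c 0 with rfl | hc
  · rw [abs_zero, Real.zero_rpow hp.ne', zero_mul]
    positivity
  set g : V → ℝ := fun ξ => if ξs ≤ ξ then c⁻¹ * f ξ else 0
  have hg : HasPathSum u ξs D g 1 := by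
    intro ξ hξ hmax
    have hc' := h.const_mul c⁻¹ ξ hξ hmax
    rw [inv_mul_cancel₀ hc] at hc'
    rw [← hc']
    refine sum_congr rfl fun ξ' hξ' => ?_
    simp only [g, if_pos (mem_filter.1 hξ').2.1, mul_assoc]
  calc |c| ^ p * betaD p u ξs D ^ p ≤ |c| ^ p * ∑ ξ, |g ξ| ^ p := by
        gcongr; exact betaD_rpow_le hp hg
    _ = ∑ ξ ∈ univ.filter (ξs ≤ ·), |f ξ| ^ p := by
        rw [mul_sum, sum_filter]
        refine sum_congr rfl fun ξ _ => ?_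
        by_cases hξ : ξs ≤ ξ
        · rw [if_pos hξ, ← Real.mul_rpow (abs_nonneg _) (abs_nonneg _), ← abs_mul]
          simp only [g, if_pos hξ, mul_inv_cancel_left₀ hc]
        · simp only [g, if_neg hξ, abs_zero, Real.zero_rpow hp.ne', mul_zero]

theorem betaD_pos {q : ℝ} (hpq : p.HolderConjugate q) (hD : D.Nonempty)
    (hne : ∃ f, HasPathSum u ξs D f 1) : 0 < betaD p u ξs D := by
  set K := (∑ ξ, |u ξ| ^ q) ^ (1 / q) with hK_def
  have key : ∀ f, HasPathSum u ξs D f 1 → 1 ≤ (∑ ξ, |f ξ| ^ p) ^ (1 / p) * K := by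
    intro f hf
    obtain ⟨ξ, hξ⟩ := D.exists_maximal hD
    calc (1 : ℝ) = ∑ ξ' ∈ univ.filter (fun ξ' : V => ξs ≤ ξ' ∧ ξ' ≤ ξ), f ξ' * u ξ' :=
          (hf ξ hξ.1 fun ζ hζ hlt => hlt.not_ge (hξ.2 hζ hlt.le)).symm
      _ ≤ (∑ ξ' ∈ univ.filter (fun ξ' : V => ξs ≤ ξ' ∧ ξ' ≤ ξ), |f ξ'| ^ p) ^ (1 / p) *
          (∑ ξ' ∈ univ.filter (fun ξ' : V => ξs ≤ ξ' ∧ ξ' ≤ ξ), |u ξ'| ^ q) ^ (1 / q) :=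
          Real.inner_le_Lp_mul_Lq _ _ _ hpq
      _ ≤ (∑ ξ', |f ξ'| ^ p) ^ (1 / p) * K := by
          have h1p : 0 ≤ 1 / p := one_div_nonneg.2 hpq.nonneg
          have h1q : 0 ≤ 1 / q := one_div_nonneg.2 hpq.symm.nonneg
          rw [hK_def]
          gcongr <;> exact subset_univ _
  obtain ⟨f₀, hf₀⟩ := hne
  have hK : 0 < K := pos_of_mul_pos_right (zero_lt_one.trans_le (key f₀ hf₀)) (by positivity)
  calc 0 < K⁻¹ := inv_pos.2 hK
    _ ≤ betaD p u ξs D := le_csInf ⟨_, f₀, hf₀, rfl⟩ <| by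
        rintro _ ⟨f, hf, rfl⟩
        exact (inv_le_iff_one_le_mul₀ hK).2 (key f hf)

end PathSums

namespace IsRootedTree

variable {V : Type} [Fintype V] [PartialOrder V]

theorem le_of_covBy_of_lt (htree : IsRootedTree V) {a b c d : V} (hab : a ⋖ b) (hbc : b ≤ c)
    (had : a < d) (hdc : d ≤ c) : b ≤ d := by
  rcases htree.2 c b d hbc hdc with h | h
  · exact h
  · exact (h.eq_or_lt.resolve_right (hab.2 had)).ge

theorem eq_of_covBy (htree : IsRootedTree V) {a b b' c : V} (hab : a ⋖ b) (hab' : a ⋖ b')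
    (hbc : b ≤ c) (hbc' : b' ≤ c) : b = b' :=
  le_antisymm (htree.le_of_covBy_of_lt hab hbc hab'.1 hbc')
    (htree.le_of_covBy_of_lt hab' hbc' hab.1 hbc)

theorem sum_filter_Icc_of_covBy {M : Type*} [AddCommMonoid M] (htree : IsRootedTree V)
    {a b c : V} (hab : a ⋖ b) (hbc : b ≤ c) (g : V → M) :
    ∑ x ∈ univ.filter (fun x => a ≤ x ∧ x ≤ c), g x
      = g a + ∑ x ∈ univ.filter (fun x => b ≤ x ∧ x ≤ c), g x := by
  have hsplit : univ.filter (fun x => a ≤ x ∧ x ≤ c)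
      = insert a (univ.filter fun x => b ≤ x ∧ x ≤ c) := by
    ext x
    simp only [mem_filter, mem_univ, true_and, mem_insert]
    constructor
    · rintro ⟨hax, hxc⟩
      rcases hax.eq_or_lt with rfl | hax
      · exact Or.inl rfl
      · exact Or.inr ⟨htree.le_of_covBy_of_lt hab hbc hax hxc, hxc⟩
    · rintro (rfl | ⟨hbx, hxc⟩)
      · exact ⟨le_rfl, hab.le.trans hbc⟩
      · exact ⟨hab.le.trans hbx, hxc⟩
  rw [hsplit, sum_insert]
  simp [hab.lt.not_ge]

variable {m : ℕ} {s : Fin m → V} {ξs : V}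

theorem sum_insert_biUnion_filter_le {M : Type*} [AddCommMonoid M] (htree : IsRootedTree V)
    (hinj : Function.Injective s) (hcov : ∀ j, ξs ⋖ s j) (g : V → M) :
    ∑ ξ ∈ insert ξs (univ.biUnion fun j => univ.filter (s j ≤ ·)), g ξ
      = g ξs + ∑ j, ∑ ξ ∈ univ.filter (s j ≤ ·), g ξ := by
  rw [sum_insert, sum_biUnion]
  · intro j _ k _ hjk
    refine disjoint_left.2 fun ξ hj hk => hjk (hinj ?_)
    exact htree.eq_of_covBy (hcov j) (hcov k) (mem_filter.1 hj).2 (mem_filter.1 hk).2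
  · simp [fun j => (hcov j).lt.not_ge]

end IsRootedTree

section Branching

variable {V : Type} [PartialOrder V] {m : ℕ} {s : Fin m → V} {ξs : V} {Ds : Fin m → Finset V}

theorem exists_branch_of_not_lt (hm : 1 ≤ m) (hcov : ∀ j, ξs ⋖ s j) (hmem : ∀ j, s j ∈ Ds j)
    {ξ : V} (hξ : ξ ∈ insert ξs (univ.biUnion Ds))
    (hmax : ∀ ζ ∈ insert ξs (univ.biUnion Ds), ¬ ξ < ζ) :
    ∃ j, ξ ∈ Ds j ∧ ∀ ζ ∈ Ds j, ¬ ξ < ζ := by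
  rcases mem_insert.1 hξ with rfl | hξ
  · exact absurd (hcov ⟨0, hm⟩).lt
      (hmax _ (mem_insert_of_mem (mem_biUnion.2 ⟨_, mem_univ _, hmem _⟩)))
  · obtain ⟨j, -, hj⟩ := mem_biUnion.1 hξ
    exact ⟨j, hj, fun ζ hζ => hmax ζ (mem_insert_of_mem (mem_biUnion.2 ⟨j, mem_univ _, hζ⟩))⟩

def graft (ξs : V) (s : Fin m → V) (c : ℝ) (g : Fin m → V → ℝ) (ξ : V) : ℝ :=
  (if ξ = ξs then c else 0) + ∑ j, if s j ≤ ξ then g j ξ else 0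

variable {c : ℝ} {g : Fin m → V → ℝ}

theorem graft_self (hcov : ∀ j, ξs ⋖ s j) : graft ξs s c g ξs = c := by
  simp [graft, fun j => (hcov j).lt.not_ge]

variable [Fintype V] {u : V → ℝ}

theorem IsRootedTree.not_lt_of_not_lt_branch (htree : IsRootedTree V)
    (hinj : Function.Injective s) (hcov : ∀ j, ξs ⋖ s j) (hDs : ∀ j, ∀ ξ ∈ Ds j, s j ≤ ξ)
    {j : Fin m} {ξ : V} (hξ : ξ ∈ Ds j) (hmax : ∀ ζ ∈ Ds j, ¬ ξ < ζ) :
    ∀ ζ ∈ insert ξs (univ.biUnion Ds), ¬ ξ < ζ := by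
  intro ζ hζ hlt
  rcases mem_insert.1 hζ with rfl | hζ
  · exact lt_asymm ((hcov j).lt.trans_le (hDs j ξ hξ)) hlt
  · obtain ⟨k, -, hk⟩ := mem_biUnion.1 hζ
    obtain rfl : j = k :=
      hinj (htree.eq_of_covBy (hcov j) (hcov k) ((hDs j ξ hξ).trans hlt.le) (hDs k ζ hk))
    exact hmax ζ hk hlt

theorem HasPathSum.of_insert_biUnion {f : V → ℝ} {c : ℝ} (htree : IsRootedTree V)
    (hinj : Function.Injective s) (hcov : ∀ j, ξs ⋖ s j) (hDs : ∀ j, ∀ ξ ∈ Ds j, s j ≤ ξ)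
    (hf : HasPathSum u ξs (insert ξs (univ.biUnion Ds)) f c) (j : Fin m) :
    HasPathSum u (s j) (Ds j) f (c - f ξs * u ξs) := by
  intro ξ hξ hmax
  have hpath := hf ξ (mem_insert_of_mem (mem_biUnion.2 ⟨j, mem_univ _, hξ⟩))
    (htree.not_lt_of_not_lt_branch hinj hcov hDs hξ hmax)
  rw [htree.sum_filter_Icc_of_covBy (hcov j) (hDs j ξ hξ)] at hpath
  linarith

theorem IsRootedTree.graft_of_le (htree : IsRootedTree V) (hinj : Function.Injective s)
    (hcov : ∀ j, ξs ⋖ s j) {j : Fin m} {ξ : V} (hξ : s j ≤ ξ) : graft ξs s c g ξ = g j ξ := by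
  rw [graft, if_neg ((hcov j).lt.trans_le hξ).ne', zero_add, sum_eq_single j, if_pos hξ]
  · intro k _ hkj
    exact if_neg fun hk => hkj (hinj (htree.eq_of_covBy (hcov k) (hcov j) hk hξ))
  · simp

theorem IsRootedTree.sum_abs_rpow_graft (htree : IsRootedTree V) (hinj : Function.Injective s)
    (hcov : ∀ j, ξs ⋖ s j) {p : ℝ} (hp : 0 < p) :
    ∑ ξ, |graft ξs s c g ξ| ^ p = |c| ^ p + ∑ j, ∑ ξ ∈ univ.filter (s j ≤ ·), |g j ξ| ^ p := by
  rw [← sum_subset (subset_univ (insert ξs (univ.biUnion fun j => univ.filter (s j ≤ ·)))),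
    htree.sum_insert_biUnion_filter_le hinj hcov, graft_self hcov]
  · congr 1
    refine sum_congr rfl fun j _ => sum_congr rfl fun ξ hξ => ?_
    rw [htree.graft_of_le hinj hcov (mem_filter.1 hξ).2]
  · intro ξ _ hξ
    simp only [mem_insert, mem_biUnion, mem_univ, mem_filter, true_and, not_or,
      not_exists] at hξ
    simp [graft, hξ.1, hξ.2, Real.zero_rpow hp.ne']

theorem IsRootedTree.hasPathSum_graft (htree : IsRootedTree V) (hinj : Function.Injective s)
    (hcov : ∀ j, ξs ⋖ s j) (hm : 1 ≤ m) (hmem : ∀ j, s j ∈ Ds j)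
    (hDs : ∀ j, ∀ ξ ∈ Ds j, s j ≤ ξ) {d : ℝ} (hg : ∀ j, HasPathSum u (s j) (Ds j) (g j) d) :
    HasPathSum u ξs (insert ξs (univ.biUnion Ds)) (graft ξs s c g) (c * u ξs + d) := by
  intro ξ hξ hmax
  obtain ⟨j, hξj, hmaxj⟩ := exists_branch_of_not_lt hm hcov hmem hξ hmax
  rw [htree.sum_filter_Icc_of_covBy (hcov j) (hDs j ξ hξj), graft_self hcov,
    ← hg j ξ hξj hmaxj]
  congr 1
  exact sum_congr rfl fun ξ' hξ' => by rw [htree.graft_of_le hinj hcov (mem_filter.1 hξ').2.1]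

theorem HasPathSum.abs_rpow_add_le_sum {f : V → ℝ}
    (htree : IsRootedTree V) (hinj : Function.Injective s) (hcov : ∀ j, ξs ⋖ s j)
    (hDs : ∀ j, ∀ ξ ∈ Ds j, s j ≤ ξ) {p : ℝ} (hp : 0 < p) (hu : 0 < u ξs)
    (hf : HasPathSum u ξs (insert ξs (univ.biUnion Ds)) f 1) :
    |f ξs * u ξs| ^ p * u ξs ^ (-p) + |1 - f ξs * u ξs| ^ p * ∑ j, betaD p u (s j) (Ds j) ^ p
      ≤ ∑ ξ, |f ξ| ^ p := by
  have hroot : |f ξs * u ξs| ^ p * u ξs ^ (-p) = |f ξs| ^ p := by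
    rw [abs_mul, abs_of_pos hu, Real.mul_rpow (abs_nonneg _) hu.le, mul_assoc,
      ← Real.rpow_add hu, add_neg_cancel, Real.rpow_zero, mul_one]
  calc _ = |f ξs| ^ p + ∑ j, |1 - f ξs * u ξs| ^ p * betaD p u (s j) (Ds j) ^ p := by
        rw [hroot, mul_sum]
    _ ≤ |f ξs| ^ p + ∑ j, ∑ ξ ∈ univ.filter (s j ≤ ·), |f ξ| ^ p := by
        gcongr with j
        exact abs_rpow_mul_betaD_rpow_le hp (hf.of_insert_biUnion htree hinj hcov hDs j)
    _ = ∑ ξ ∈ insert ξs (univ.biUnion fun j => univ.filter (s j ≤ ·)), |f ξ| ^ p :=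
        (htree.sum_insert_biUnion_filter_le hinj hcov fun ξ => |f ξ| ^ p).symm
    _ ≤ ∑ ξ, |f ξ| ^ p :=
        sum_le_sum_of_subset_of_nonneg (subset_univ _) fun _ _ _ => by positivity

theorem IsRootedTree.betaD_rpow_le_of_branches (htree : IsRootedTree V)
    (hinj : Function.Injective s) (hcov : ∀ j, ξs ⋖ s j) (hm : 1 ≤ m) (hmem : ∀ j, s j ∈ Ds j)
    (hDs : ∀ j, ∀ ξ ∈ Ds j, s j ≤ ξ) {p : ℝ} (hp : 0 < p) (hu : 0 < u ξs)
    (hne : ∀ j, ∃ g, HasPathSum u (s j) (Ds j) g 1) (t : ℝ) :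
    betaD p u ξs (insert ξs (univ.biUnion Ds)) ^ p
      ≤ |t| ^ p * u ξs ^ (-p) + |1 - t| ^ p * ∑ j, betaD p u (s j) (Ds j) ^ p := by
  set T := ∑ j, betaD p u (s j) (Ds j) ^ p
  set A := |t| ^ p * u ξs ^ (-p)
  have key : ∀ ε > 0, betaD p u ξs (insert ξs (univ.biUnion Ds)) ^ p
      ≤ A + |1 - t| ^ p * (T + m * ε) := by
    intro ε hε
    choose g hg hgε using fun j => exists_hasPathSum_sum_rpow_lt hp (hne j) hε
    have hF := htree.hasPathSum_graft hinj hcov hm hmem hDs (c := t / u ξs)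
      fun j => (hg j).const_mul (1 - t)
    rw [div_mul_cancel₀ t hu.ne', mul_one, add_sub_cancel] at hF
    have hbranch : ∑ j, ∑ ξ ∈ univ.filter (s j ≤ ·), |g j ξ| ^ p ≤ T + m * ε :=
      calc _ ≤ ∑ j, (betaD p u (s j) (Ds j) ^ p + ε) := sum_le_sum fun j _ =>
            (sum_le_sum_of_subset_of_nonneg (subset_univ _) fun _ _ _ => by positivity).trans
              (hgε j).le
        _ = T + m * ε := by simp [T, sum_add_distrib]
    calc _ ≤ _ := betaD_rpow_le hp hF
      _ = A + |1 - t| ^ p * ∑ j, ∑ ξ ∈ univ.filter (s j ≤ ·), |g j ξ| ^ p := by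
          have hroot : |t / u ξs| ^ p = A := by
            rw [abs_div, abs_of_pos hu, Real.div_rpow (abs_nonneg _) hu.le, div_eq_mul_inv,
              ← Real.rpow_neg hu.le]
          rw [htree.sum_abs_rpow_graft hinj hcov hp, hroot]
          simp only [abs_mul, Real.mul_rpow (abs_nonneg _) (abs_nonneg _), mul_sum]
      _ ≤ A + |1 - t| ^ p * (T + m * ε) := by gcongr
  have hlim : Tendsto (fun ε : ℝ => A + |1 - t| ^ p * (T + m * ε)) (𝓝[>] 0)
      (𝓝 (A + |1 - t| ^ p * T)) := by
    refine tendsto_nhdsWithin_of_tendsto_nhds ?_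
    have hcont : Continuous fun ε : ℝ => A + |1 - t| ^ p * (T + m * ε) := by fun_prop
    simpa using hcont.tendsto 0
  exact ge_of_tendsto hlim (eventually_nhdsWithin_of_forall key)

theorem IsRootedTree.betaD_rpow_insert_biUnion {p q : ℝ} (hpq : p.HolderConjugate q)
    (htree : IsRootedTree V) (hinj : Function.Injective s) (hcov : ∀ j, ξs ⋖ s j) (hm : 1 ≤ m)
    (hmem : ∀ j, s j ∈ Ds j) (hDs : ∀ j, ∀ ξ ∈ Ds j, s j ≤ ξ) (hu : ∀ ξ, 0 < u ξ) :
    betaD p u ξs (insert ξs (univ.biUnion Ds)) ^ p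
      = (u ξs ^ q + (∑ j, betaD p u (s j) (Ds j) ^ p) ^ (-(q / p))) ^ (1 - p) := by
  have hne : ∀ j, ∃ g, HasPathSum u (s j) (Ds j) g 1 :=
    fun j => ⟨_, hasPathSum_ite_root (hu _).ne' (hDs j)⟩
  have hT : 0 < ∑ j, betaD p u (s j) (Ds j) ^ p :=
    sum_pos (fun j _ => Real.rpow_pos_of_pos (betaD_pos hpq ⟨_, hmem j⟩ (hne j)) _)
      ⟨⟨0, hm⟩, mem_univ _⟩
  have hx : 0 < u ξs ^ (-p) := Real.rpow_pos_of_pos (hu ξs) _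
  have hux : (u ξs ^ (-p)) ^ (-(q / p)) = u ξs ^ q := by
    rw [← Real.rpow_mul (hu ξs).le, neg_mul_neg, mul_div_cancel₀ _ hpq.ne_zero]
  have hD : ∀ ξ ∈ insert ξs (univ.biUnion Ds), ξs ≤ ξ := by
    simp only [mem_insert, mem_biUnion, mem_univ, true_and]
    rintro ξ (rfl | ⟨j, hj⟩)
    exacts [le_rfl, (hcov j).le.trans (hDs j ξ hj)]
  rw [← hux]
  refine le_antisymm ?_ ?_
  · obtain ⟨t, ht⟩ := hpq.exists_abs_rpow_mul_add_eq hx hT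
    exact ht ▸ htree.betaD_rpow_le_of_branches hinj hcov hm hmem hDs hpq.pos (hu ξs) hne t
  · refine le_betaD_rpow hpq.pos ⟨_, hasPathSum_ite_root (hu ξs).ne' hD⟩ (by positivity)
      fun f hf => ?_
    exact (hpq.rpow_one_sub_le_abs_rpow_mul_add hx hT _).trans
      (hf.abs_rpow_add_le_sum htree hinj hcov hDs hpq.pos (hu ξs))

end Branching

theorem statement7_general (p : ℝ) (hp : 1 < p)
    (V : Type) [Fintype V] [PartialOrder V] (htree : IsRootedTree V)
    (u : V → ℝ) (hu : ∀ ξ : V, 0 < u ξ)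
    (ξs : V) (m : ℕ) (hm : 1 ≤ m)
    (s : Fin m → V) (hinj : Function.Injective s)
    (hcov : ∀ j : Fin m, ξs ⋖ s j)
    (Ds : Fin m → Finset V) (hDs : ∀ j : Fin m, Jfam (s j) (Ds j)) :
    betaD p u ξs (insert ξs (Finset.univ.biUnion Ds)) ^ (-(p / (p - 1)))
      = u ξs ^ (p / (p - 1)) +
        (∑ j : Fin m, betaD p u (s j) (Ds j) ^ p) ^ (-((p / (p - 1)) / p)) := by
  have hpq : p.HolderConjugate (p / (p - 1)) := .conjExponent hp
  set q := p / (p - 1)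
  have hβ := htree.betaD_rpow_insert_biUnion hpq hinj hcov hm (fun j => (hDs j).1)
    (fun j => (hDs j).2.1) hu
  have hS : 0 < u ξs ^ q + (∑ j, betaD p u (s j) (Ds j) ^ p) ^ (-(q / p)) :=
    add_pos_of_pos_of_nonneg (Real.rpow_pos_of_pos (hu ξs) _)
      (Real.rpow_nonneg (sum_nonneg fun j _ => Real.rpow_nonneg betaD_nonneg _) _)
  calc betaD p u ξs (insert ξs (univ.biUnion Ds)) ^ (-q)
      = (betaD p u ξs (insert ξs (univ.biUnion Ds)) ^ p) ^ (-(q / p)) := by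
        rw [← Real.rpow_mul betaD_nonneg, mul_neg, mul_div_cancel₀ _ hpq.ne_zero]
    _ = _ := by
        rw [hβ, ← Real.rpow_mul hS.le, mul_neg, ← neg_mul, neg_sub, ← mul_div_assoc,
          hpq.sub_one_mul_conj, div_self hpq.ne_zero, Real.rpow_one]

/-- the recursion formula for `β_D` when `D` is assembled from the root
`ξs` and subtrees `D_j ∈ J'_{ξ_j}` attached at the immediate successors `ξ_j` of `ξs`:
`β_D^{−p'} = u(ξs)^{p'} + (∑_j β_{D_j}^p)^{−p'/p}` with `p' = p/(p−1)`. -/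
theorem statement7 (p : ℝ) (hp : 1 < p)
    (V : Type) [Fintype V] [PartialOrder V] (htree : IsRootedTree V)
    (u : V → ℝ) (hu : ∀ ξ : V, 0 < u ξ)
    (ξs : V) (m : ℕ) (hm : 1 ≤ m)
    (s : Fin m → V) (hinj : Function.Injective s)
    (hcov : ∀ j : Fin m, ξs ⋖ s j)
    (hall : ∀ η : V, ξs ⋖ η → ∃ j : Fin m, s j = η)
    (Ds : Fin m → Finset V) (hDs : ∀ j : Fin m, Jfam (s j) (Ds j)) :
    betaD p u ξs (insert ξs (Finset.univ.biUnion Ds)) ^ (-(p / (p - 1)))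
      = u ξs ^ (p / (p - 1)) +
        (∑ j : Fin m, betaD p u (s j) (Ds j) ^ p) ^ (-((p / (p - 1)) / p)) :=
  statement7_general p hp V htree u hu ξs m hm s hinj hcov Ds hDs
end
end

section
/- Fix 1 < p < ∞ and C* ≥ 1. Then there exists σ̂ > 0, depending only on p and C*, with the following property. Let (V, ≤) be a finite rooted tree, ψ : ℕ → [0, ∞) increasing with ψ(0) = 0, and suppose card V_{j−j₀}(ξ) ≤ C* 2^{ψ(j)−ψ(j₀)} for all j₀ ≤ j and all ξ of depth j₀. Let u be level-constant, u(ξ) = u_{|ξ|} > 0, and suppose that for some σ ∈ (0, σ̂) one has u_j 2^{−ψ(j)/p} ≥ σ^{−1/p'} u_{j−1} 2^{−ψ(j−1)/p} for all j ≥ 1, where p' = p/(p−1). Then for every ξ* ∈ V and every D ∈ J'_{ξ*}: S_D ≤ B_D ≤ 2 S_D, where B_D = 1/β_D and S_D = (∑_{ξ maximal in D} u(ξ)^{−p})^{−1/p}. -/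
open scoped Classical

noncomputable section

/-!
Let `M` be the set of leaves (maximal elements) of `D` and `T = ∑_{ξ ∈ M} u(ξ)^{-p}`.
Testing with `f = u⁻¹ · 1_M` gives `β_D ≤ T^{1/p}`. Conversely, summing the constraints of an
admissible `f` against `u(ξ)^{-p}` gives `T = ∑_{ξ'} f(ξ') u(ξ') N(ξ')` with
`N(ξ') = ∑_{ξ ∈ M, ξ' ≤ ξ} u(ξ)^{-p}`, so by Hölder `T ≤ ‖f‖_p (∑ (u N)^{p'})^{1/p'}` and it
suffices to show `∑ (u N)^{p'} ≤ 2T`. On `M` the terms are exactly `u^{-p}`. For `ξ' ∉ M`, the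
growth bound on the levels and the condition on `u` give
`card V_{j-i}(ξ') · u_j^{-p} ≤ C* s^{2(j-i)} u_i^{-p}` for `i = |ξ'|`, with `s = σ^{(p-1)/2}`; a
weighted Hölder inequality then bounds `(u N)^{p'}(ξ')` by
`(C* s/(1-s))^{p'-1} ∑_{ξ ∈ M, ξ' < ξ} u(ξ)^{-p} s^{(p'-1)(|ξ|-|ξ'|)}`.
Summing over `ξ'` along the chain below each leaf leaves a geometric series, and the total is at
most `T` once `σ` is small.
-/

open Finset

theorem sum_pow_comp_le_of_injOn {α : Type*} {S : Finset α} {g : α → ℕ}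
    (hg : Set.InjOn g S) {s : ℝ} (h0 : 0 ≤ s) (h1 : s < 1) :
    ∑ x ∈ S, s ^ g x ≤ (1 - s)⁻¹ := by
  rw [← sum_image hg]
  calc ∑ k ∈ S.image g, s ^ k ≤ ∑' k, s ^ k :=
        (summable_geometric_of_lt_one h0 h1).sum_le_tsum _ fun k _ => pow_nonneg h0 k
    _ = (1 - s)⁻¹ := tsum_geometric_of_lt_one h0 h1

theorem sum_pow_comp_le_of_injOn_of_pos {α : Type*} {S : Finset α} {g : α → ℕ}
    (hg : Set.InjOn g S) (hpos : ∀ x ∈ S, 0 < g x) {s : ℝ} (h0 : 0 ≤ s) (h1 : s < 1) :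
    ∑ x ∈ S, s ^ g x ≤ s / (1 - s) := by
  have hg' : Set.InjOn (fun x => g x - 1) S := fun x hx y hy hxy => by
    have := hpos x hx; have := hpos y hy
    exact hg hx hy (by simp only at hxy; omega)
  calc ∑ x ∈ S, s ^ g x = s * ∑ x ∈ S, s ^ (g x - 1) := by
        rw [mul_sum]
        refine sum_congr rfl fun x hx => ?_
        rw [← pow_succ', Nat.sub_add_cancel (hpos x hx)]
    _ ≤ s * (1 - s)⁻¹ := mul_le_mul_of_nonneg_left (sum_pow_comp_le_of_injOn hg' h0 h1) h0
    _ = s / (1 - s) := (div_eq_mul_inv s _).symm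

theorem sum_comp_le_of_card_fiber_mul_le {α : Type*} (S : Finset α) (d : α → ℕ) (h : ℕ → ℝ)
    (m : ℕ) {B s : ℝ} (hB : 0 ≤ B) (h0 : 0 ≤ s) (h1 : s < 1) (hd : ∀ x ∈ S, m < d x)
    (hfiber : ∀ j, m < j → #{x ∈ S | d x = j} * h j ≤ B * s ^ (j - m)) :
    ∑ x ∈ S, h (d x) ≤ B * (s / (1 - s)) := by
  rw [← sum_fiberwise_of_maps_to (g := d) (t := S.image d) fun x hx => mem_image_of_mem d hx]
  have hinj : Set.InjOn (fun j => j - m) (S.image d) := fun i hi j hj hij => by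
    obtain ⟨x, hx, rfl⟩ := mem_image.1 hi
    obtain ⟨y, hy, rfl⟩ := mem_image.1 hj
    have := hd x hx; have := hd y hy
    simp only at hij; omega
  calc ∑ j ∈ S.image d, ∑ x ∈ S with d x = j, h (d x)
      = ∑ j ∈ S.image d, #{x ∈ S | d x = j} * h j := by
        refine sum_congr rfl fun j _ => ?_
        rw [sum_congr rfl fun x hx => by rw [(mem_filter.1 hx).2], sum_const, nsmul_eq_mul]
    _ ≤ ∑ j ∈ S.image d, B * s ^ (j - m) := sum_le_sum fun j hj => by
        obtain ⟨x, hx, rfl⟩ := mem_image.1 hj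
        exact hfiber _ (hd x hx)
    _ ≤ B * (s / (1 - s)) := by
        rw [← mul_sum]
        refine mul_le_mul_of_nonneg_left (sum_pow_comp_le_of_injOn_of_pos hinj ?_ h0 h1) hB
        intro j hj
        obtain ⟨x, hx, rfl⟩ := mem_image.1 hj
        exact Nat.sub_pos_of_lt (hd x hx)

theorem rpow_sum_le_sum_div_rpow_mul_sum {ι : Type*} (S : Finset ι) {p q : ℝ}
    (hpq : p.HolderConjugate q) {a c : ι → ℝ} (ha : ∀ i, 0 ≤ a i) (hc : ∀ i, 0 < c i) :
    (∑ i ∈ S, a i) ^ q ≤ (∑ i ∈ S, a i / c i) ^ (q - 1) * ∑ i ∈ S, a i * c i ^ (q - 1) := by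
  have hq := hpq.symm
  have hHolder := Real.inner_le_weight_mul_Lp_of_nonneg S hq.lt.le (fun i => a i / c i) c
    (fun i => div_nonneg (ha i) (hc i).le) fun i => (hc i).le
  have hmul : ∀ i, a i / c i * c i = a i := fun i => div_mul_cancel₀ _ (hc i).ne'
  have hmul' : ∀ i, a i / c i * c i ^ q = a i * c i ^ (q - 1) := fun i => by
    rw [Real.rpow_sub (hc i), Real.rpow_one]; ring
  simp only [hmul, hmul'] at hHolder
  have hX : 0 ≤ ∑ i ∈ S, a i / c i := sum_nonneg fun i _ => div_nonneg (ha i) (hc i).le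
  have hY : 0 ≤ ∑ i ∈ S, a i * c i ^ (q - 1) :=
    sum_nonneg fun i _ => mul_nonneg (ha i) (Real.rpow_nonneg (hc i).le _)
  calc (∑ i ∈ S, a i) ^ q
      ≤ ((∑ i ∈ S, a i / c i) ^ (1 - q⁻¹) * (∑ i ∈ S, a i * c i ^ (q - 1)) ^ q⁻¹) ^ q :=
        Real.rpow_le_rpow (sum_nonneg fun i _ => ha i) hHolder hq.nonneg
    _ = (∑ i ∈ S, a i / c i) ^ (q - 1) * ∑ i ∈ S, a i * c i ^ (q - 1) := by
        rw [Real.mul_rpow (Real.rpow_nonneg hX _) (Real.rpow_nonneg hY _), ← Real.rpow_mul hX,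
          ← Real.rpow_mul hY, inv_mul_cancel₀ hq.ne_zero, Real.rpow_one, sub_mul, one_mul,
          inv_mul_cancel₀ hq.ne_zero]

theorem rpow_mul_rpow_neg_rpow {p q x : ℝ} (hx : 0 < x) (hpq : p.HolderConjugate q) :
    (x * x ^ (-p)) ^ q = x ^ (-p) := by
  rw [← Real.rpow_one_add' hx.le (by linarith [hpq.lt]), ← Real.rpow_mul hx.le]
  congr 1; linarith [hpq.mul_eq_add]

theorem rpow_neg_le_of_geom_growth {v : ℕ → ℝ} {r p : ℝ} (hv : ∀ j, 0 < v j) (hr : 0 < r)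
    (hp : 0 ≤ p) (h : ∀ j, r * v j ≤ v (j + 1)) (j k : ℕ) :
    v (j + k) ^ (-p) ≤ (r ^ (-p)) ^ k * v j ^ (-p) := by
  have hgrowth : r ^ k * v j ≤ v (j + k) :=
    geom_le (u := fun n => v (j + n)) hr.le k fun n _ => h (j + n)
  calc v (j + k) ^ (-p) ≤ (r ^ k * v j) ^ (-p) :=
        Real.rpow_le_rpow_of_nonpos (mul_pos (pow_pos hr k) (hv j)) hgrowth (neg_nonpos.2 hp)
    _ = (r ^ (-p)) ^ k * v j ^ (-p) := by
        rw [Real.mul_rpow (pow_nonneg hr.le k) (hv j).le, Real.rpow_pow_comm hr.le]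

section Depth

variable {V : Type} [PartialOrder V]

theorem treeDepth_eq_ncard (ξ : V) : treeDepth ξ = (Set.Iio ξ).ncard := rfl

variable [Finite V]

theorem treeDepth_strictMono : StrictMono (treeDepth : V → ℕ) := fun _ _ h => by
  simp only [treeDepth_eq_ncard]
  exact Set.ncard_lt_ncard (Set.Iio_ssubset_Iio h)

theorem treeDepth_injOn_Iio {ξ : V}
    (hchain : ∀ η₁ η₂ : V, η₁ ≤ ξ → η₂ ≤ ξ → η₁ ≤ η₂ ∨ η₂ ≤ η₁) :
    Set.InjOn treeDepth (Set.Iio ξ) := fun x hx y hy hxy => by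
  rcases hchain x y (le_of_lt hx) (le_of_lt hy) with h | h
  · exact h.eq_or_lt.resolve_right fun hlt => (treeDepth_strictMono hlt).ne hxy
  · exact (h.eq_or_lt.resolve_right fun hlt => (treeDepth_strictMono hlt).ne hxy.symm).symm

end Depth

section MassAbove

variable {V : Type} [PartialOrder V]

def massAbove (M : Finset V) (a : V → ℝ) (η : V) : ℝ := ∑ ξ ∈ M with η ≤ ξ, a ξ

theorem massAbove_of_notMem {M : Finset V} {a : V → ℝ} {η : V} (hη : η ∉ M) :
    massAbove M a η = ∑ ξ ∈ M with η < ξ, a ξ := by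
  refine sum_congr (filter_congr fun ξ hξ => ?_) fun _ _ => rfl
  exact ⟨fun h => lt_of_le_of_ne h fun h' => hη (h' ▸ hξ), le_of_lt⟩

end MassAbove

section Duality

variable {V : Type} [Fintype V] [PartialOrder V]

-- `[Fintype V]` only serves to give the filter the decidability instance it has in `statement8`.
def leaves (D : Finset V) : Finset V := D.filter fun ξ => ∀ ζ ∈ D, ¬ ξ < ζ

/-- The constraint set of the infimum defining `betaD p U ξs D`. -/
def IsAdmissible (U : V → ℝ) (ξs : V) (D : Finset V) (f : V → ℝ) : Prop :=
  ∀ ξ ∈ D, (∀ ζ ∈ D, ¬ ξ < ζ) →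
    ∑ ξ' ∈ univ.filter (fun ξ' : V => ξs ≤ ξ' ∧ ξ' ≤ ξ), f ξ' * U ξ' = 1

variable {p : ℝ} {U : V → ℝ} {ξs : V} {D : Finset V}

theorem leaves_nonempty (hξs : ξs ∈ D) : (leaves D).Nonempty := by
  obtain ⟨m, hm⟩ := D.exists_maximal ⟨ξs, hξs⟩
  exact ⟨m, mem_filter.2 ⟨hm.1, fun ζ hζ hlt => hlt.not_ge (hm.2 hζ hlt.le)⟩⟩

theorem massAbove_leaves {a : V → ℝ} {ξ : V} (hξ : ξ ∈ leaves D) :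
    massAbove (leaves D) a ξ = a ξ := by
  have hsingle : (leaves D).filter (ξ ≤ ·) = {ξ} := by
    ext ζ
    simp only [mem_filter, mem_singleton]
    refine ⟨fun ⟨hζ, hle⟩ => ?_, by rintro rfl; exact ⟨hξ, le_rfl⟩⟩
    by_contra hne
    exact (mem_filter.1 hξ).2 ζ (mem_filter.1 hζ).1 (lt_of_le_of_ne hle (Ne.symm hne))
  rw [massAbove, hsingle, sum_singleton]

theorem betaD_le_of_isAdmissible {f : V → ℝ} (hf : IsAdmissible U ξs D f) :
    betaD p U ξs D ≤ (∑ ξ, |f ξ| ^ p) ^ (1 / p) := by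
  refine csInf_le ⟨0, ?_⟩ ⟨f, hf, rfl⟩
  rintro _ ⟨g, -, rfl⟩
  exact Real.rpow_nonneg (sum_nonneg fun _ _ => Real.rpow_nonneg (abs_nonneg _) _) _

theorem le_betaD {b : ℝ} (hne : ∃ f, IsAdmissible U ξs D f)
    (h : ∀ f, IsAdmissible U ξs D f → b ≤ (∑ ξ, |f ξ| ^ p) ^ (1 / p)) :
    b ≤ betaD p U ξs D := by
  obtain ⟨f, hf⟩ := hne
  refine le_csInf ⟨_, f, hf, rfl⟩ ?_
  rintro _ ⟨g, hg, rfl⟩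
  exact h g hg

theorem isAdmissible_indicator_leaves (hU : ∀ ξ ∈ leaves D, U ξ ≠ 0)
    (hD : ∀ ξ ∈ D, ξs ≤ ξ) :
    IsAdmissible U ξs D fun ξ => if ξ ∈ leaves D then (U ξ)⁻¹ else 0 := by
  intro ξ hξD hmax
  have hξ : ξ ∈ leaves D := mem_filter.2 ⟨hξD, hmax⟩
  have hdiag : ∀ ξ' ∈ univ.filter (fun ξ' : V => ξs ≤ ξ' ∧ ξ' ≤ ξ),
      (if ξ' ∈ leaves D then (U ξ')⁻¹ else 0) * U ξ' = if ξ' = ξ then 1 else 0 := by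
    intro ξ' hξ'
    have hle := (mem_filter.1 hξ').2.2
    by_cases hξ'M : ξ' ∈ leaves D
    · have heq : ξ' = ξ := by
        by_contra hne
        exact (mem_filter.1 hξ'M).2 ξ hξD (lt_of_le_of_ne hle hne)
      subst heq
      simp [hξ'M, hU _ hξ'M]
    · have hne : ξ' ≠ ξ := fun h => hξ'M (h ▸ hξ)
      simp [hξ'M, hne]
  rw [sum_congr rfl hdiag, sum_ite_eq']
  simp [hD ξ hξD]

theorem betaD_le_s8 (hp : p ≠ 0) (hU : ∀ ξ, 0 < U ξ) (hD : ∀ ξ ∈ D, ξs ≤ ξ) :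
    betaD p U ξs D ≤ (∑ ξ ∈ leaves D, U ξ ^ (-p)) ^ (1 / p) := by
  refine (betaD_le_of_isAdmissible (isAdmissible_indicator_leaves
    (fun ξ _ => (hU ξ).ne') hD)).trans_eq ?_
  have hterm : ∀ ξ, |if ξ ∈ leaves D then (U ξ)⁻¹ else 0| ^ p
      = if ξ ∈ leaves D then U ξ ^ (-p) else 0 := fun ξ => by
    split_ifs
    · rw [abs_of_pos (inv_pos.2 (hU ξ)), Real.inv_rpow (hU ξ).le, Real.rpow_neg (hU ξ).le]
    · rw [abs_zero, Real.zero_rpow hp]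
  rw [sum_congr rfl fun ξ _ => hterm ξ, sum_ite_mem, univ_inter]

theorem sum_leaves_eq_sum_mul_massAbove {f : V → ℝ} (hf : IsAdmissible U ξs D f) (a : V → ℝ) :
    ∑ ξ ∈ leaves D, a ξ
      = ∑ ξ' ∈ univ.filter (ξs ≤ ·), f ξ' * U ξ' * massAbove (leaves D) a ξ' :=
  calc ∑ ξ ∈ leaves D, a ξ
      = ∑ ξ ∈ leaves D, ∑ ξ' ∈ univ.filter (fun ξ' => ξs ≤ ξ' ∧ ξ' ≤ ξ),
          f ξ' * U ξ' * a ξ := sum_congr rfl fun ξ hξ => by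
        rw [← sum_mul, hf ξ (mem_filter.1 hξ).1 (mem_filter.1 hξ).2, one_mul]
    _ = ∑ ξ' ∈ univ.filter (ξs ≤ ·), ∑ ξ ∈ (leaves D).filter (ξ' ≤ ·), f ξ' * U ξ' * a ξ :=
        sum_comm' fun ξ ξ' => by simp only [mem_filter, mem_univ, true_and]; tauto
    _ = _ := sum_congr rfl fun _ _ => (mul_sum _ _ _).symm

theorem rpow_div_le_betaD {q : ℝ} (hpq : p.HolderConjugate q) (hU : ∀ ξ, 0 < U ξ)
    (hξs : ξs ∈ D) (hD : ∀ ξ ∈ D, ξs ≤ ξ) {A : ℝ} (hA : 0 < A)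
    (hkey : ∑ ξ' ∈ univ.filter (ξs ≤ ·),
        (U ξ' * massAbove (leaves D) (fun ξ => U ξ ^ (-p)) ξ') ^ q
      ≤ A * ∑ ξ ∈ leaves D, U ξ ^ (-p)) :
    (∑ ξ ∈ leaves D, U ξ ^ (-p)) ^ (1 / p) / A ^ (1 / q) ≤ betaD p U ξs D := by
  set T := ∑ ξ ∈ leaves D, U ξ ^ (-p)
  set N := massAbove (leaves D) fun ξ => U ξ ^ (-p)
  have hT : 0 < T := sum_pos (fun ξ _ => Real.rpow_pos_of_pos (hU ξ) _) (leaves_nonempty hξs)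
  have hN : ∀ ξ', 0 ≤ U ξ' * N ξ' := fun ξ' =>
    mul_nonneg (hU ξ').le (sum_nonneg fun ξ _ => (Real.rpow_pos_of_pos (hU ξ) _).le)
  refine le_betaD ⟨_, isAdmissible_indicator_leaves (fun ξ _ => (hU ξ).ne') hD⟩ fun f hf => ?_
  have hHolder : T ≤ (∑ ξ, |f ξ| ^ p) ^ (1 / p) * (A * T) ^ (1 / q) :=
    calc T = ∑ ξ' ∈ univ.filter (ξs ≤ ·), f ξ' * U ξ' * N ξ' :=
          sum_leaves_eq_sum_mul_massAbove hf _
      _ ≤ ∑ ξ' ∈ univ.filter (ξs ≤ ·), |f ξ'| * (U ξ' * N ξ') := sum_le_sum fun ξ' _ => by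
          rw [mul_assoc]; exact mul_le_mul_of_nonneg_right (le_abs_self _) (hN ξ')
      _ ≤ (∑ ξ' ∈ univ.filter (ξs ≤ ·), |f ξ'| ^ p) ^ (1 / p)
          * (∑ ξ' ∈ univ.filter (ξs ≤ ·), (U ξ' * N ξ') ^ q) ^ (1 / q) :=
          Real.inner_le_Lp_mul_Lq_of_nonneg _ hpq (fun _ _ => abs_nonneg _) fun ξ' _ => hN ξ'
      _ ≤ _ := by
          have hfp : ∀ ξ, 0 ≤ |f ξ| ^ p := fun ξ => Real.rpow_nonneg (abs_nonneg _) _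
          refine mul_le_mul (Real.rpow_le_rpow (sum_nonneg fun ξ _ => hfp ξ)
            (sum_le_sum_of_subset_of_nonneg (subset_univ _) fun ξ _ _ => hfp ξ)
            hpq.one_div_nonneg) (Real.rpow_le_rpow ?_ hkey hpq.symm.one_div_nonneg)
            (Real.rpow_nonneg ?_ _) (Real.rpow_nonneg (sum_nonneg fun ξ _ => hfp ξ) _) <;>
          exact sum_nonneg fun ξ' _ => Real.rpow_nonneg (hN ξ') _
  have hsplit : T = T ^ (1 / p) * T ^ (1 / q) := by
    rw [← Real.rpow_add hT, hpq.one_div_add_one_div, div_one, Real.rpow_one]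
  rw [Real.mul_rpow hA.le hT.le, ← mul_assoc] at hHolder
  nth_rewrite 1 [hsplit] at hHolder
  rw [div_le_iff₀ (Real.rpow_pos_of_pos hA _)]
  exact le_of_mul_le_mul_right hHolder (Real.rpow_pos_of_pos hT _)

theorem rpow_neg_le_inv_betaD_le_two_mul {q : ℝ} (hpq : p.HolderConjugate q)
    (hU : ∀ ξ, 0 < U ξ) (hξs : ξs ∈ D) (hD : ∀ ξ ∈ D, ξs ≤ ξ)
    (hkey : ∑ ξ' ∈ univ.filter (ξs ≤ ·),
        (U ξ' * massAbove (leaves D) (fun ξ => U ξ ^ (-p)) ξ') ^ q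
      ≤ 2 * ∑ ξ ∈ leaves D, U ξ ^ (-p)) :
    (∑ ξ ∈ leaves D, U ξ ^ (-p)) ^ (-(1 / p)) ≤ (betaD p U ξs D)⁻¹ ∧
      (betaD p U ξs D)⁻¹ ≤ 2 * (∑ ξ ∈ leaves D, U ξ ^ (-p)) ^ (-(1 / p)) := by
  set T := ∑ ξ ∈ leaves D, U ξ ^ (-p)
  have hT : 0 < T := sum_pos (fun ξ _ => Real.rpow_pos_of_pos (hU ξ) _) (leaves_nonempty hξs)
  have hTp : 0 < T ^ (1 / p) := Real.rpow_pos_of_pos hT _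
  have h2q : 0 < (2 : ℝ) ^ (1 / q) := Real.rpow_pos_of_pos two_pos _
  have h2q_le : (2 : ℝ) ^ (1 / q) ≤ 2 :=
    Real.rpow_le_self_of_one_le one_le_two ((div_le_one hpq.symm.pos).2 hpq.symm.lt.le)
  have hlow := rpow_div_le_betaD hpq hU hξs hD two_pos hkey
  have hup := betaD_le_s8 hpq.pos.ne' hU hD
  rw [Real.rpow_neg hT.le]
  constructor
  · exact inv_anti₀ (div_pos hTp h2q |>.trans_le hlow) hup
  · calc (betaD p U ξs D)⁻¹ ≤ (T ^ (1 / p) / 2 ^ (1 / q))⁻¹ := inv_anti₀ (div_pos hTp h2q) hlow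
      _ = 2 ^ (1 / q) * (T ^ (1 / p))⁻¹ := by rw [inv_div, div_eq_mul_inv]
      _ ≤ 2 * (T ^ (1 / p))⁻¹ := by gcongr

end Duality

section TreeEstimate

variable {V : Type} [Fintype V] [PartialOrder V] {p q C s : ℝ} {u : ℕ → ℝ}

def LevelMassBound (u : ℕ → ℝ) (p C ρ : ℝ) (η : V) : Prop :=
  ∀ j, treeDepth η ≤ j → (#(univ.filter fun ζ => η ≤ ζ ∧ treeDepth ζ = j) : ℝ) * u j ^ (-p)
    ≤ C * ρ ^ (j - treeDepth η) * u (treeDepth η) ^ (-p)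

theorem levelMassBound_of_growth {σ : ℝ} {ψ : ℕ → ℝ} (hp : 0 < p) (hC : 0 ≤ C) (hσ : 0 < σ)
    (hu : ∀ j, 0 < u j)
    (hcard : ∀ j₀ j : ℕ, j₀ ≤ j → ∀ ξ : V, treeDepth ξ = j₀ →
      (Nat.card {η : V // ξ ≤ η ∧ treeDepth η = j} : ℝ) ≤ C * (2 : ℝ) ^ (ψ j - ψ j₀))
    (hgrowth : ∀ j : ℕ, σ ^ (-((p - 1) / p)) * (u j * (2 : ℝ) ^ (-(ψ j) / p))
      ≤ u (j + 1) * (2 : ℝ) ^ (-(ψ (j + 1)) / p))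
    (η : V) : LevelMassBound u p C (σ ^ (p - 1)) η := by
  intro j hj
  set m := treeDepth η
  have hv : ∀ i, (u i * (2 : ℝ) ^ (-(ψ i) / p)) ^ (-p) = u i ^ (-p) * 2 ^ ψ i := fun i => by
    rw [Real.mul_rpow (hu i).le (by positivity), ← Real.rpow_mul two_pos.le]
    congr 2; field_simp
  have hr : (σ ^ (-((p - 1) / p))) ^ (-p) = σ ^ (p - 1) := by
    rw [← Real.rpow_mul hσ.le]; congr 1; field_simp
  have hdecay := rpow_neg_le_of_geom_growth (v := fun i => u i * (2 : ℝ) ^ (-(ψ i) / p))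
    (fun i => mul_pos (hu i) (by positivity)) (by positivity) hp.le hgrowth m (j - m)
  simp only [Nat.add_sub_cancel' hj, hv, hr] at hdecay
  have hcount := hcard m j hj η rfl
  rw [Nat.card_eq_fintype_card, Fintype.card_subtype] at hcount
  calc (#(univ.filter fun ζ => η ≤ ζ ∧ treeDepth ζ = j) : ℝ) * u j ^ (-p)
      ≤ C * 2 ^ (ψ j - ψ m) * u j ^ (-p) :=
        mul_le_mul_of_nonneg_right hcount (Real.rpow_pos_of_pos (hu j) _).le
    _ = C * (2 ^ ψ m)⁻¹ * (u j ^ (-p) * 2 ^ ψ j) := by rw [Real.rpow_sub two_pos]; ring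
    _ ≤ C * (2 ^ ψ m)⁻¹ * ((σ ^ (p - 1)) ^ (j - m) * (u m ^ (-p) * 2 ^ ψ m)) :=
        mul_le_mul_of_nonneg_left hdecay (by positivity)
    _ = C * (σ ^ (p - 1)) ^ (j - m) * u m ^ (-p) := by field_simp

variable {η : V} {S : Finset V}

theorem sum_rpow_neg_div_pow_le (hu : ∀ j, 0 < u j) (hs0 : 0 < s) (hs1 : s < 1) (hC : 0 ≤ C)
    (hlevel : LevelMassBound u p C (s ^ 2) η)
    (hS : ∀ ξ ∈ S, η < ξ) :
    ∑ ξ ∈ S, u (treeDepth ξ) ^ (-p) / s ^ (treeDepth ξ - treeDepth η)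
      ≤ C * u (treeDepth η) ^ (-p) * (s / (1 - s)) := by
  set m := treeDepth η
  refine sum_comp_le_of_card_fiber_mul_le S treeDepth (fun j => u j ^ (-p) / s ^ (j - m)) m
    (by have := hu m; positivity) hs0.le hs1 (fun ξ hξ => treeDepth_strictMono (hS ξ hξ))
    fun j hj => ?_
  have hsub : #{ξ ∈ S | treeDepth ξ = j} ≤ #(univ.filter fun ζ => η ≤ ζ ∧ treeDepth ζ = j) :=
    card_le_card fun ξ hξ => by
      rw [mem_filter] at hξ ⊢
      exact ⟨mem_univ _, (hS ξ hξ.1).le, hξ.2⟩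
  have hsj : 0 < s ^ (j - m) := pow_pos hs0 _
  calc (#{ξ ∈ S | treeDepth ξ = j} : ℝ) * (u j ^ (-p) / s ^ (j - m))
      ≤ #(univ.filter fun ζ => η ≤ ζ ∧ treeDepth ζ = j) * u j ^ (-p) / s ^ (j - m) := by
        rw [mul_div_assoc]
        exact mul_le_mul_of_nonneg_right (by exact_mod_cast hsub) (by have := hu j; positivity)
    _ ≤ C * (s ^ 2) ^ (j - m) * u m ^ (-p) / s ^ (j - m) :=
        div_le_div_of_nonneg_right (hlevel j hj.le) hsj.le
    _ = C * u m ^ (-p) * s ^ (j - m) := by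
        rw [← pow_mul, mul_comm 2, pow_mul, sq]; field_simp

theorem rpow_mul_sum_rpow_neg_le (hpq : p.HolderConjugate q) (hu : ∀ j, 0 < u j)
    (hs0 : 0 < s) (hs1 : s < 1) (hC : 0 ≤ C)
    (hlevel : LevelMassBound u p C (s ^ 2) η)
    (hS : ∀ ξ ∈ S, η < ξ) :
    (u (treeDepth η) * ∑ ξ ∈ S, u (treeDepth ξ) ^ (-p)) ^ q
      ≤ (C * (s / (1 - s))) ^ (q - 1)
        * ∑ ξ ∈ S, u (treeDepth ξ) ^ (-p) * (s ^ (q - 1)) ^ (treeDepth ξ - treeDepth η) := by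
  set m := treeDepth η
  have ha : ∀ ξ : V, 0 ≤ u (treeDepth ξ) ^ (-p) := fun ξ => (Real.rpow_pos_of_pos (hu _) _).le
  have hq1 : 0 ≤ q - 1 := hpq.symm.sub_one_pos.le
  -- the weights `s ^ (depth ξ - depth η)` spend half of the decay `s ^ 2` per level, leaving a
  -- geometric factor that is summed along chains below the leaves
  have hHolder := rpow_sum_le_sum_div_rpow_mul_sum S hpq ha (c := fun ξ => s ^ (treeDepth ξ - m))
    fun ξ => pow_pos hs0 _
  have hA := sum_rpow_neg_div_pow_le hu hs0 hs1 hC hlevel hS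
  have hcancel : u m ^ q * (u m ^ (-p)) ^ (q - 1) = 1 := by
    rw [← Real.rpow_mul (hu m).le, ← Real.rpow_add (hu m)]
    convert Real.rpow_zero (u m) using 2
    linarith [hpq.mul_eq_add]
  calc (u m * ∑ ξ ∈ S, u (treeDepth ξ) ^ (-p)) ^ q
      = u m ^ q * (∑ ξ ∈ S, u (treeDepth ξ) ^ (-p)) ^ q :=
        Real.mul_rpow (hu m).le (sum_nonneg fun ξ _ => ha ξ)
    _ ≤ u m ^ q * ((C * u m ^ (-p) * (s / (1 - s))) ^ (q - 1)
          * ∑ ξ ∈ S, u (treeDepth ξ) ^ (-p) * (s ^ (treeDepth ξ - m)) ^ (q - 1)) := by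
        refine mul_le_mul_of_nonneg_left (hHolder.trans ?_) (Real.rpow_nonneg (hu m).le _)
        refine mul_le_mul_of_nonneg_right (Real.rpow_le_rpow ?_ hA hq1) ?_
        · exact sum_nonneg fun ξ _ => div_nonneg (ha ξ) (pow_pos hs0 _).le
        · exact sum_nonneg fun ξ _ => mul_nonneg (ha ξ) (Real.rpow_nonneg (pow_pos hs0 _).le _)
    _ = (C * (s / (1 - s))) ^ (q - 1) * (u m ^ q * (u m ^ (-p)) ^ (q - 1))
          * ∑ ξ ∈ S, u (treeDepth ξ) ^ (-p) * (s ^ (q - 1)) ^ (treeDepth ξ - m) := by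
        have hs : 0 ≤ s / (1 - s) := div_nonneg hs0.le (by linarith)
        rw [mul_right_comm C, Real.mul_rpow (mul_nonneg hC hs) (ha η)]
        simp only [Real.rpow_pow_comm hs0.le]
        ring
    _ = _ := by rw [hcancel, mul_one]

theorem sum_rpow_mul_massAbove_le (hpq : p.HolderConjugate q) (hu : ∀ j, 0 < u j)
    (hs0 : 0 < s) (hs1 : s < 1) (hC : 0 ≤ C)
    (hchain : ∀ ξ η₁ η₂ : V, η₁ ≤ ξ → η₂ ≤ ξ → η₁ ≤ η₂ ∨ η₂ ≤ η₁)
    (hlevel : ∀ η : V, LevelMassBound u p C (s ^ 2) η)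
    {M R : Finset V} (hRM : Disjoint R M) :
    ∑ η ∈ R, (u (treeDepth η) * massAbove M (fun ξ => u (treeDepth ξ) ^ (-p)) η) ^ q
      ≤ (C * (s / (1 - s))) ^ (q - 1) * (s ^ (q - 1) / (1 - s ^ (q - 1)))
        * ∑ ξ ∈ M, u (treeDepth ξ) ^ (-p) := by
  set K := (C * (s / (1 - s))) ^ (q - 1)
  set s' := s ^ (q - 1)
  have hs'0 : 0 ≤ s' := Real.rpow_nonneg hs0.le _
  have hs'1 : s' < 1 := Real.rpow_lt_one hs0.le hs1 hpq.symm.sub_one_pos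
  have ha : ∀ ξ : V, 0 ≤ u (treeDepth ξ) ^ (-p) := fun ξ => (Real.rpow_pos_of_pos (hu _) _).le
  -- the vertices below `ξ` form a chain, so their depths are distinct
  have hgeom : ∀ ξ : V, ∑ η ∈ R with η < ξ, s' ^ (treeDepth ξ - treeDepth η) ≤ s' / (1 - s') := by
    intro ξ
    refine sum_pow_comp_le_of_injOn_of_pos (fun η₁ h₁ η₂ h₂ h => ?_) (fun η hη => ?_) hs'0 hs'1
    · have hlt₁ := treeDepth_strictMono (mem_filter.1 h₁).2
      have hlt₂ := treeDepth_strictMono (mem_filter.1 h₂).2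
      exact treeDepth_injOn_Iio (hchain ξ) (mem_filter.1 h₁).2 (mem_filter.1 h₂).2
        (by omega)
    · exact Nat.sub_pos_of_lt (treeDepth_strictMono (mem_filter.1 hη).2)
  calc ∑ η ∈ R, (u (treeDepth η) * massAbove M (fun ξ => u (treeDepth ξ) ^ (-p)) η) ^ q
      ≤ ∑ η ∈ R, K * ∑ ξ ∈ M with η < ξ,
          u (treeDepth ξ) ^ (-p) * s' ^ (treeDepth ξ - treeDepth η) :=
        sum_le_sum fun η hη => by
          rw [massAbove_of_notMem (disjoint_left.1 hRM hη)]
          exact rpow_mul_sum_rpow_neg_le hpq hu hs0 hs1 hC (hlevel η) fun ξ hξ =>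
            (mem_filter.1 hξ).2
    _ = K * ∑ ξ ∈ M, u (treeDepth ξ) ^ (-p) * ∑ η ∈ R with η < ξ,
          s' ^ (treeDepth ξ - treeDepth η) := by
        rw [← mul_sum]
        congr 1
        simp only [mul_sum]
        exact sum_comm' fun η ξ => by simp only [mem_filter]; tauto
    _ ≤ K * ∑ ξ ∈ M, u (treeDepth ξ) ^ (-p) * (s' / (1 - s')) :=
        mul_le_mul_of_nonneg_left (sum_le_sum fun ξ _ =>
          mul_le_mul_of_nonneg_left (hgeom ξ) (ha ξ)) (Real.rpow_nonneg (by positivity) _)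
    _ = K * (s' / (1 - s')) * ∑ ξ ∈ M, u (treeDepth ξ) ^ (-p) := by
        rw [← sum_mul]; ring

theorem sum_rpow_mul_massAbove_leaves_le_two_mul (hpq : p.HolderConjugate q)
    (hu : ∀ j, 0 < u j) (hs0 : 0 < s) (hs1 : s < 1) (hC : 0 ≤ C)
    (hchain : ∀ ξ η₁ η₂ : V, η₁ ≤ ξ → η₂ ≤ ξ → η₁ ≤ η₂ ∨ η₂ ≤ η₁)
    (hlevel : ∀ η : V, LevelMassBound u p C (s ^ 2) η)
    (hsmall : (C * (s / (1 - s))) ^ (q - 1) * (s ^ (q - 1) / (1 - s ^ (q - 1))) ≤ 1)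
    {ξs : V} {D : Finset V} (hD : ∀ ξ ∈ D, ξs ≤ ξ) :
    ∑ η ∈ univ.filter (ξs ≤ ·),
        (u (treeDepth η) * massAbove (leaves D) (fun ξ => u (treeDepth ξ) ^ (-p)) η) ^ q
      ≤ 2 * ∑ ξ ∈ leaves D, u (treeDepth ξ) ^ (-p) := by
  have hsub : leaves D ⊆ univ.filter (ξs ≤ ·) := fun ξ hξ =>
    mem_filter.2 ⟨mem_univ _, hD ξ (mem_filter.1 hξ).1⟩
  have hT : 0 ≤ ∑ ξ ∈ leaves D, u (treeDepth ξ) ^ (-p) :=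
    sum_nonneg fun ξ _ => (Real.rpow_pos_of_pos (hu _) _).le
  have hleaves : ∑ η ∈ leaves D,
      (u (treeDepth η) * massAbove (leaves D) (fun ξ => u (treeDepth ξ) ^ (-p)) η) ^ q
        = ∑ ξ ∈ leaves D, u (treeDepth ξ) ^ (-p) := sum_congr rfl fun η hη => by
    rw [massAbove_leaves hη, rpow_mul_rpow_neg_rpow (hu _) hpq]
  have hrest := sum_rpow_mul_massAbove_le hpq hu hs0 hs1 hC hchain hlevel (M := leaves D)
    sdiff_disjoint (R := univ.filter (ξs ≤ ·) \ leaves D)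
  rw [← sum_sdiff hsub, hleaves]
  nlinarith [mul_le_mul_of_nonneg_right hsmall hT]

end TreeEstimate

theorem rpow_mul_div_le_one {p q C s : ℝ} (hpq : p.HolderConjugate q) (hC : 1 ≤ C) (hs0 : 0 < s)
    (hs : s ≤ (2 : ℝ) ^ (-p) / C) :
    (C * (s / (1 - s))) ^ (q - 1) * (s ^ (q - 1) / (1 - s ^ (q - 1))) ≤ 1 := by
  have hp := hpq.lt
  have hhalf : ∀ y : ℝ, 0 ≤ y → y ≤ 2 ^ (-(p - 1)) → y ^ (q - 1) ≤ 1 / 2 := fun y hy0 hy =>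
    calc y ^ (q - 1) ≤ ((2 : ℝ) ^ (-(p - 1))) ^ (q - 1) :=
          Real.rpow_le_rpow hy0 hy hpq.symm.sub_one_pos.le
      _ = 1 / 2 := by
          rw [← Real.rpow_mul two_pos.le, neg_mul,
            show (p - 1) * (q - 1) = 1 by linarith [hpq.mul_eq_add], Real.rpow_neg_one, one_div]
  have hCs : C * s ≤ 2 ^ (-p) := by rwa [le_div_iff₀ (by linarith), mul_comm] at hs
  have h2p : (2 : ℝ) ^ (-p) ≤ 1 / 2 := by
    rw [one_div, ← Real.rpow_neg_one]
    exact Real.rpow_le_rpow_of_exponent_le one_le_two (by linarith)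
  have hs2 : s ≤ 2 ^ (-p) := hs.trans (div_le_self (by positivity) hC)
  have h1s0 : 0 < 1 - s := by linarith
  have h1s : (1 - s)⁻¹ ≤ 2 := by
    rw [inv_le_comm₀ h1s0 two_pos]; linarith
  have hCs0 : 0 ≤ C * (s / (1 - s)) := mul_nonneg (by linarith) (div_nonneg hs0.le h1s0.le)
  have hs' : s ^ (q - 1) ≤ 1 / 2 := hhalf s hs0.le
    (hs2.trans (Real.rpow_le_rpow_of_exponent_le one_le_two (by linarith)))
  have hCss : C * (s / (1 - s)) * s ≤ 2 ^ (-(p - 1)) :=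
    calc C * (s / (1 - s)) * s = (C * s) * s * (1 - s)⁻¹ := by ring
      _ ≤ 2 ^ (-p) * 1 * 2 := by have := inv_nonneg.2 h1s0.le; gcongr; linarith
      _ = 2 ^ (-(p - 1)) := by
          rw [mul_one, neg_sub, Real.rpow_sub two_pos, Real.rpow_one, Real.rpow_neg two_pos.le]
          field_simp
  calc (C * (s / (1 - s))) ^ (q - 1) * (s ^ (q - 1) / (1 - s ^ (q - 1)))
      = (C * (s / (1 - s)) * s) ^ (q - 1) / (1 - s ^ (q - 1)) := by
        rw [Real.mul_rpow hCs0 hs0.le]; ring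
    _ ≤ (1 / 2) / (1 / 2) := div_le_div₀ (by norm_num) (hhalf _ (mul_nonneg hCs0 hs0.le) hCss)
        (by norm_num) (by linarith)
    _ = 1 := by norm_num

/-- the reduction lemma: under the growth condition on the tree and the
condition `(σ)` on the level-constant weight `u`, the recursively defined quantity
`B_D = β_D⁻¹` is comparable (between `S_D` and `2 S_D`) with
`S_D = (∑_{ξ maximal in D} u(ξ)^{−p})^{−1/p}`. -/
theorem statement8 (p : ℝ) (hp : 1 < p) (Cstar : ℝ) (hC : 1 ≤ Cstar) :
    ∃ σhat : ℝ, 0 < σhat ∧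
      ∀ (V : Type) [Fintype V] [PartialOrder V], IsRootedTree V →
      ∀ ψ : ℕ → ℝ, (∀ j : ℕ, 0 ≤ ψ j) → Monotone ψ → ψ 0 = 0 →
      (∀ j₀ j : ℕ, j₀ ≤ j → ∀ ξ : V, treeDepth ξ = j₀ →
        (Nat.card {η : V // ξ ≤ η ∧ treeDepth η = j} : ℝ)
          ≤ Cstar * (2 : ℝ) ^ (ψ j - ψ j₀)) →
      ∀ u : ℕ → ℝ, (∀ j : ℕ, 0 < u j) →
      ∀ σ : ℝ, 0 < σ → σ < σhat →
      (∀ j : ℕ, σ ^ (-((p - 1) / p)) * (u j * (2 : ℝ) ^ (-(ψ j) / p))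
          ≤ u (j + 1) * (2 : ℝ) ^ (-(ψ (j + 1)) / p)) →
      ∀ ξs : V, ∀ D : Finset V, Jfam ξs D →
        (∑ ξ ∈ D.filter (fun ξ => ∀ ζ ∈ D, ¬ ξ < ζ),
            (u (treeDepth ξ)) ^ (-p)) ^ (-(1 / p))
          ≤ (betaD p (fun ξ : V => u (treeDepth ξ)) ξs D)⁻¹ ∧
        (betaD p (fun ξ : V => u (treeDepth ξ)) ξs D)⁻¹
          ≤ 2 * (∑ ξ ∈ D.filter (fun ξ => ∀ ζ ∈ D, ¬ ξ < ζ),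
              (u (treeDepth ξ)) ^ (-p)) ^ (-(1 / p)) := by
  have hpq := Real.HolderConjugate.conjExponent hp
  have hs₀ : 0 < (2 : ℝ) ^ (-p) / Cstar := by positivity
  refine ⟨((2 : ℝ) ^ (-p) / Cstar) ^ (2 / (p - 1)), by positivity, ?_⟩
  intro V _ _ hTree ψ _ _ _ hcard u hu σ hσ hσlt hgrowth ξs D hD
  set s := σ ^ ((p - 1) / 2)
  have hs0 : 0 < s := by positivity
  have hs : s ≤ 2 ^ (-p) / Cstar :=
    calc s ≤ (((2 : ℝ) ^ (-p) / Cstar) ^ (2 / (p - 1))) ^ ((p - 1) / 2) :=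
          Real.rpow_le_rpow hσ.le hσlt.le (by linarith)
      _ = 2 ^ (-p) / Cstar := by
          rw [← Real.rpow_mul hs₀.le, div_mul_div_cancel₀ (by linarith : p - 1 ≠ 0),
            div_self two_ne_zero, Real.rpow_one]
  have hs1 : s < 1 := hs.trans_lt ((div_le_self (by positivity) hC).trans_lt
    (Real.rpow_lt_one_of_one_lt_of_neg one_lt_two (by linarith)))
  have hσs : σ ^ (p - 1) = s ^ 2 := by
    rw [← Real.rpow_natCast, ← Real.rpow_mul hσ.le]; norm_num
  have hlevel := levelMassBound_of_growth (by linarith) (by linarith) hσ hu hcard hgrowth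
  simp only [hσs] at hlevel
  exact rpow_neg_le_inv_betaD_le_two_mul hpq (fun ξ => hu _) hD.1 hD.2.1
    (sum_rpow_mul_massAbove_leaves_le_two_mul hpq hu hs0 hs1 (by linarith) hTree.2 hlevel
      (rpow_mul_div_le_one hpq hC hs0 hs) hD.2.1)
end
end
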